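/- arXiv:1809.03996 — 8 statements merged into one kernel-verified Lean document; each statement's English description precedes it below -/
import Mathlib

section
/- Let m ∈ ℕ, 𝒫 ⊆ [m], and U = {Σ_{i∈𝒫} a_i e_i : a_i ∈ ℝ} be the coordinate subspace of ℝ^m supported on 𝒫. Let φ : U → ℝ be convex and positively homogeneous, and let f : U → ℝ be concave and positively homogeneous. Then the following are equivalent: (1) φ(a) ≤ f(a) for every a ∈ U; (2) φ(a) ≤ f(a) for every a ∈ U all of whose coordinates lie in {−1, 0, 1}. -/
theorem convex_le_concave_iff_on_pm_one_vectors {m : ℕ}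
    (Psupp : Finset (Fin m)) (U : Set (Fin m → ℝ))
    (hU : U = {a | ∀ i, i ∉ Psupp → a i = 0})
    (φ f : (Fin m → ℝ) → ℝ)
    (hφconv : ConvexOn ℝ U φ)
    (hφhom : ∀ α : ℝ, 0 < α → ∀ v ∈ U, φ (α • v) = α * φ v)
    (hfconc : ConcaveOn ℝ U f)
    (hfhom : ∀ α : ℝ, 0 < α → ∀ v ∈ U, f (α • v) = α * f v) :
    (∀ a ∈ U, φ a ≤ f a) ↔
      (∀ a ∈ U, (∀ i, a i = -1 ∨ a i = 0 ∨ a i = 1) → φ a ≤ f a) := by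
  constructor
  · intro h a ha _
    exact h a ha
  · intro h a ha
    -- key: for b ∈ U with all |b i| ≤ 1, φ b ≤ f b
    have key : ∀ n : ℕ, ∀ b : Fin m → ℝ, b ∈ U → (∀ i, |b i| ≤ 1) →
        (Finset.univ.filter (fun i => ¬ (b i = -1 ∨ b i = 0 ∨ b i = 1))).card ≤ n →
        φ b ≤ f b := by
      intro n
      induction n with
      | zero =>
        intro b hb hb1 hcard
        apply h b hb
        intro i
        by_contra hi
        have hmem : i ∈ Finset.univ.filter
            (fun i => ¬ (b i = -1 ∨ b i = 0 ∨ b i = 1)) := by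
          simp only [Finset.mem_filter, Finset.mem_univ, true_and]
          exact hi
        have := Finset.card_pos.mpr ⟨i, hmem⟩
        omega
      | succ n ih =>
        intro b hb hb1 hcard
        by_cases hc : (Finset.univ.filter
            (fun i => ¬ (b i = -1 ∨ b i = 0 ∨ b i = 1))).card ≤ n
        · exact ih b hb hb1 hc
        · have hc' : n < (Finset.univ.filter
              (fun i => ¬ (b i = -1 ∨ b i = 0 ∨ b i = 1))).card := Nat.lt_of_not_le hc
          obtain ⟨i, hi⟩ : ∃ i, i ∈ Finset.univ.filter
              (fun i => ¬ (b i = -1 ∨ b i = 0 ∨ b i = 1)) := by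
            apply Finset.card_pos.mp
            omega
          have hi' : ¬ (b i = -1 ∨ b i = 0 ∨ b i = 1) := by
            simpa using hi
          push_neg at hi'
          obtain ⟨hne1, hne0, hpe1⟩ := hi'
          set x := b i with hx
          have hxlt : |x| < 1 := lt_of_le_of_ne (hb1 i) (by
            intro habs
            rcases abs_eq (by norm_num : (0:ℝ) ≤ 1) |>.mp habs with h' | h'
            · exact hpe1 h'
            · exact hne1 h')
          set c : ℝ := if 0 < x then 1 else -1 with hc_def
          set t : ℝ := |x| with ht_def
          have ht0 : 0 < t := abs_pos.mpr hne0
          have htc : t * c = x := by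
            rcases lt_trichotomy x 0 with h' | h' | h'
            · rw [hc_def, if_neg (not_lt.mpr h'.le), ht_def, abs_of_neg h']; ring
            · exact absurd h' hne0
            · rw [hc_def, if_pos h', ht_def, abs_of_pos h']; ring
          have hcabs : |c| = 1 := by
            rw [hc_def]; split <;> simp
          set b0 : Fin m → ℝ := Function.update b i 0 with hb0_def
          set b1 : Fin m → ℝ := Function.update b i c with hb1_def
          have hb0U : b0 ∈ U := by
            rw [hU] at hb ⊢
            intro j hj
            by_cases hji : j = i
            · subst hji; simp [hb0_def]
            · rw [hb0_def, Function.update_of_ne hji]; exact hb j hj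
          have hb1U : b1 ∈ U := by
            rw [hU] at hb ⊢
            intro j hj
            by_cases hji : j = i
            · subst hji
              exact absurd (hb j hj) hne0
            · rw [hb1_def, Function.update_of_ne hji]; exact hb j hj
          have hb0le : ∀ j, |b0 j| ≤ 1 := by
            intro j
            by_cases hji : j = i
            · subst hji; simp [hb0_def]
            · rw [hb0_def, Function.update_of_ne hji]; exact hb1 j
          have hb1le : ∀ j, |b1 j| ≤ 1 := by
            intro j
            by_cases hji : j = i
            · subst hji; simp [hb1_def, hcabs]
            · rw [hb1_def, Function.update_of_ne hji]; exact hb1 j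
          have hdecomp : b = (1 - t) • b0 + t • b1 := by
            funext j
            by_cases hji : j = i
            · subst hji
              simp only [Pi.add_apply, Pi.smul_apply, smul_eq_mul, hb0_def, hb1_def,
                Function.update_self]
              rw [← hx, ← htc]; ring
            · simp only [Pi.add_apply, Pi.smul_apply, smul_eq_mul, hb0_def, hb1_def,
                Function.update_of_ne hji]
              ring
          have hsub : ∀ (v : Fin m → ℝ), (∀ j, j ≠ i → v j = b j) →
              (v i = -1 ∨ v i = 0 ∨ v i = 1) →
              (Finset.univ.filter (fun j => ¬ (v j = -1 ∨ v j = 0 ∨ v j = 1))).card ≤ n := by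
            intro v hvj hvi
            have hsubset : (Finset.univ.filter (fun j => ¬ (v j = -1 ∨ v j = 0 ∨ v j = 1)))
                ⊆ (Finset.univ.filter
                  (fun j => ¬ (b j = -1 ∨ b j = 0 ∨ b j = 1))).erase i := by
              intro j hj
              simp only [Finset.mem_filter, Finset.mem_univ, true_and] at hj
              have hji : j ≠ i := by
                intro habs; subst habs; exact hj hvi
              rw [Finset.mem_erase]
              refine ⟨hji, ?_⟩
              simp only [Finset.mem_filter, Finset.mem_univ, true_and]
              rw [← hvj j hji]; exact hj
            calc _ ≤ ((Finset.univ.filter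
                  (fun j => ¬ (b j = -1 ∨ b j = 0 ∨ b j = 1))).erase i).card :=
                Finset.card_le_card hsubset
              _ = (Finset.univ.filter
                  (fun j => ¬ (b j = -1 ∨ b j = 0 ∨ b j = 1))).card - 1 :=
                Finset.card_erase_of_mem hi
              _ ≤ n := by omega
          have hcard0 := hsub b0 (fun j hj => Function.update_of_ne hj _ _)
            (Or.inr (Or.inl (Function.update_self _ _ _)))
          have hcard1 := hsub b1 (fun j hj => Function.update_of_ne hj _ _)
            (by
              show Function.update b i c i = -1 ∨ Function.update b i c i = 0 ∨
                Function.update b i c i = 1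
              rw [Function.update_self, hc_def]
              split
              · exact Or.inr (Or.inr rfl)
              · exact Or.inl rfl)
          have h0 := ih b0 hb0U hb0le hcard0
          have h1 := ih b1 hb1U hb1le hcard1
          have ht1 : (0:ℝ) ≤ 1 - t := by linarith
          have hφle := hφconv.2 hb0U hb1U ht1 ht0.le (by ring)
          have hfle := hfconc.2 hb0U hb1U ht1 ht0.le (by ring)
          rw [hdecomp]
          calc φ ((1 - t) • b0 + t • b1) ≤ (1 - t) * φ b0 + t * φ b1 := hφle
            _ ≤ (1 - t) * f b0 + t * f b1 := by nlinarith
            _ ≤ f ((1 - t) • b0 + t • b1) := hfle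
    by_cases ha0 : a = 0
    · subst ha0
      exact h 0 ha (fun i => Or.inr (Or.inl rfl))
    · obtain ⟨i0, hi0⟩ : ∃ i, a i ≠ 0 := by
        by_contra habs
        push_neg at habs
        exact ha0 (funext habs)
      have hne : (Finset.univ : Finset (Fin m)).Nonempty := ⟨i0, Finset.mem_univ i0⟩
      set M : ℝ := Finset.univ.sup' hne (fun i => |a i|) with hM_def
      have hMpos : 0 < M :=
        lt_of_lt_of_le (abs_pos.mpr hi0)
          (Finset.le_sup' (fun i => |a i|) (Finset.mem_univ i0))
      set b : Fin m → ℝ := M⁻¹ • a with hb_def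
      have hbU : b ∈ U := by
        rw [hU] at ha ⊢
        intro j hj
        simp [hb_def, ha j hj]
      have hble : ∀ j, |b j| ≤ 1 := by
        intro j
        rw [hb_def]
        simp only [Pi.smul_apply, smul_eq_mul, abs_mul, abs_inv, abs_of_pos hMpos]
        rw [inv_mul_le_iff₀ hMpos, mul_one]
        exact Finset.le_sup' (fun i => |a i|) (Finset.mem_univ j)
      have hkey := key (Finset.univ.filter
        (fun i => ¬ (b i = -1 ∨ b i = 0 ∨ b i = 1))).card b hbU hble le_rfl
      have hab : a = M • b := by
        rw [hb_def, smul_smul, mul_inv_cancel₀ (ne_of_gt hMpos), one_smul]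
      rw [hab, hφhom M hMpos b hbU, hfhom M hMpos b hbU]
      exact mul_le_mul_of_nonneg_left hkey hMpos.le
end

section
/- Let t, m ∈ ℕ, let [m] = P_1 ∪̇ ⋯ ∪̇ P_t be a partition of [m] into nonempty disjoint subsets, let 𝒫 ⊆ [m], and U = {Σ_{i∈𝒫} a_i e_i : a_i ∈ ℝ}. Let φ : U → ℝ be convex and positively homogeneous, and for given real numbers α_{ij} define f : U → ℝ by f(a) = Σ_j Σ_{i=1}^t α_{ij} · a^i_{↓j}, where a^i is the restriction of a to the index set P_i and a^i_{↓j} is the j-th largest entry of a^i. Then the following are equivalent: (1) φ(a) ≤ f(a) for every a ∈ U; (2) φ(a) ≤ f(a) for every a ∈ U all of whose coordinates lie in {−1, 0, 1}. -/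
/-- The `j`-th largest entry of the tuple `x` (indices starting from `0`,
so `downOrd x 0` is the largest entry). -/
noncomputable def downOrd {p : ℕ} (x : Fin p → ℝ) (j : Fin p) : ℝ :=
  x (Tuple.sort x j.rev)

/-- The restriction of the vector `a : Fin m → ℝ` to the index set `P`,
listed according to the natural order of the indices. -/
noncomputable def restrictTo {m : ℕ} (a : Fin m → ℝ) (P : Finset (Fin m)) :
    Fin P.card → ℝ :=
  fun j => a ((P.orderIsoOfFin rfl j : P) : Fin m)

lemma downOrd_comp {p : ℕ} (g : ℝ → ℝ) (hg : Monotone g) (x : Fin p → ℝ) (j : Fin p) :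
    downOrd (g ∘ x) j = g (downOrd x j) := by
  have h1 : (g ∘ x) ∘ (Tuple.sort x) = (g ∘ x) ∘ Tuple.sort (g ∘ x) :=
    Tuple.comp_sort_eq_comp_iff_monotone.mpr (hg.comp (Tuple.monotone_sort x))
  have := congrFun h1 j.rev
  simp only [Function.comp] at this
  simp [downOrd, ← this, Function.comp]

/-- level function: sign-indicator at level `s`. -/
noncomputable def ggAux (s y : ℝ) : ℝ := if s ≤ y then 1 else if y ≤ -s then -1 else 0

/-- soft-threshold. -/
noncomputable def hhAux (s y : ℝ) : ℝ := max (y - s) (min 0 (y + s))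

lemma ggAux_mono {s : ℝ} (hs : 0 < s) : Monotone (ggAux s) := by
  intro y₁ y₂ h
  unfold ggAux
  split_ifs <;> norm_num <;> linarith

lemma hhAux_mono (s : ℝ) : Monotone (hhAux s) := by
  intro y₁ y₂ h
  exact max_le_max (by linarith) (min_le_min le_rfl (by linarith))

lemma hh_add_gg {s y : ℝ} (hs : 0 < s) (hy : y = 0 ∨ s ≤ |y|) :
    hhAux s y + s * ggAux s y = y := by
  unfold hhAux ggAux
  rcases hy with rfl | hy
  · rw [if_neg (by linarith), if_neg (by linarith),
      show (0:ℝ) + s = s by ring, min_eq_left hs.le, max_eq_right (by linarith)]; ring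
  · rcases le_abs.mp hy with h | h
    · rw [if_pos h, max_eq_left (le_trans (min_le_left _ _) (by linarith))]; ring
    · rw [if_neg (by linarith), if_pos (by linarith),
        min_eq_right (by linarith), max_eq_right (by linarith)]; ring

theorem convex_bound_iff_bound_on_pm_one_vectors {t m : ℕ}
    (P : Fin t → Finset (Fin m))
    (hPne : ∀ i, (P i).Nonempty)
    (hPdisj : ∀ i j, i ≠ j → Disjoint (P i) (P j))
    (hPcover : ∀ x : Fin m, ∃ i, x ∈ P i)
    (Psupp : Finset (Fin m)) (U : Set (Fin m → ℝ))
    (hU : U = {a | ∀ i, i ∉ Psupp → a i = 0})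
    (φ : (Fin m → ℝ) → ℝ)
    (hφconv : ConvexOn ℝ U φ)
    (hφhom : ∀ α : ℝ, 0 < α → ∀ v ∈ U, φ (α • v) = α * φ v)
    (α : Fin t → ℕ → ℝ)
    (f : (Fin m → ℝ) → ℝ)
    (hf : ∀ a, f a = ∑ i : Fin t, ∑ j : Fin (P i).card,
      α i (j : ℕ) * downOrd (restrictTo a (P i)) j) :
    (∀ a ∈ U, φ a ≤ f a) ↔
      (∀ a ∈ U, (∀ i, a i = -1 ∨ a i = 0 ∨ a i = 1) → φ a ≤ f a) := by
  constructor
  · exact fun h a ha _ => h a ha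
  intro hpm
  -- subadditivity of φ on U
  have hUmem : ∀ x y : Fin m → ℝ, ∀ c d : ℝ, x ∈ U → y ∈ U → c • x + d • y ∈ U := by
    intro x y c d hx hy
    rw [hU] at *
    intro i hi
    simp [hx i hi, hy i hi]
  have hsub : ∀ x ∈ U, ∀ y ∈ U, φ (x + y) ≤ φ x + φ y := by
    intro x hx y hy
    have hw : (1/2 : ℝ) • x + (1/2 : ℝ) • y ∈ U := hUmem x y _ _ hx hy
    have h2 : (2 : ℝ) • ((1/2 : ℝ) • x + (1/2 : ℝ) • y) = x + y := by
      rw [smul_add, smul_smul, smul_smul]; norm_num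
    calc φ (x + y) = 2 * φ ((1/2 : ℝ) • x + (1/2 : ℝ) • y) := by
          rw [← hφhom 2 (by norm_num) _ hw, h2]
      _ ≤ 2 * ((1/2 : ℝ) * φ x + (1/2 : ℝ) * φ y) := by
          have := hφconv.2 hx hy (by norm_num : (0:ℝ) ≤ 1/2) (by norm_num : (0:ℝ) ≤ 1/2)
            (by norm_num)
          simp only [smul_eq_mul] at this
          linarith
      _ = φ x + φ y := by ring
  -- main induction
  have key : ∀ n : ℕ, ∀ a : Fin m → ℝ, a ∈ U →
      ((Finset.image (fun i => |a i|) Finset.univ).erase 0).card ≤ n → φ a ≤ f a := by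
    intro n
    induction n with
    | zero =>
      intro a ha hcard
      apply hpm a ha
      intro i
      right; left
      by_contra h
      have : |a i| ∈ (Finset.image (fun i => |a i|) Finset.univ).erase 0 := by
        refine Finset.mem_erase.mpr ⟨by simpa [abs_eq_zero] using h, ?_⟩
        exact Finset.mem_image.mpr ⟨i, Finset.mem_univ i, rfl⟩
      have := Finset.card_pos.mpr ⟨_, this⟩
      omega
    | succ n ih =>
      intro a ha hcard
      by_cases h0 : ∀ i, a i = 0
      · exact hpm a ha (fun i => Or.inr (Or.inl (h0 i)))
      push_neg at h0
      obtain ⟨i0, hi0⟩ := h0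
      set T := (Finset.image (fun i => |a i|) Finset.univ).erase 0 with hT
      have hTne : T.Nonempty := by
        refine ⟨|a i0|, Finset.mem_erase.mpr ⟨by simpa [abs_eq_zero] using hi0, ?_⟩⟩
        exact Finset.mem_image.mpr ⟨i0, Finset.mem_univ i0, rfl⟩
      set s := T.min' hTne with hsdef
      have hsT : s ∈ T := T.min'_mem hTne
      have hs0 : 0 < s := by
        rcases Finset.mem_erase.mp hsT with ⟨hne, hmem⟩
        obtain ⟨k, -, hk⟩ := Finset.mem_image.mp hmem
        have : 0 ≤ s := hk ▸ abs_nonneg _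
        exact lt_of_le_of_ne this (Ne.symm hne)
      have hentry : ∀ k, a k = 0 ∨ s ≤ |a k| := by
        intro k
        by_cases hk : a k = 0
        · exact Or.inl hk
        · refine Or.inr (T.min'_le _ (Finset.mem_erase.mpr
            ⟨by simpa [abs_eq_zero] using hk, Finset.mem_image.mpr ⟨k, Finset.mem_univ k, rfl⟩⟩))
      set v : Fin m → ℝ := fun i => ggAux s (a i) with hv
      set a' : Fin m → ℝ := fun i => hhAux s (a i) with ha'
      have hgg0 : ggAux s 0 = 0 := by unfold ggAux; rw [if_neg (by linarith), if_neg (by linarith)]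
      have hhh0 : hhAux s 0 = 0 := by
        unfold hhAux
        rw [show (0:ℝ) + s = s by ring, min_eq_left hs0.le, max_eq_right (by linarith)]
      have hvU : v ∈ U := by
        rw [hU] at ha ⊢; intro i hi; simp [hv, ha i hi, hgg0]
      have ha'U : a' ∈ U := by
        rw [hU] at ha ⊢; intro i hi; simp [ha', ha i hi, hhh0]
      have hdecomp : a = a' + s • v := by
        funext k
        have := hh_add_gg hs0 (hentry k)
        simp only [Pi.add_apply, Pi.smul_apply, ha', hv, smul_eq_mul]
        linarith
      -- card bound for a'
      have hcard' : ((Finset.image (fun i => |a' i|) Finset.univ).erase 0).card ≤ n := by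
        have hsubset : (Finset.image (fun i => |a' i|) Finset.univ).erase 0 ⊆
            (T.image (fun y => y - s)).erase 0 := by
          intro y hy
          rcases Finset.mem_erase.mp hy with ⟨hy0, hymem⟩
          obtain ⟨k, -, hk⟩ := Finset.mem_image.mp hymem
          rcases hentry k with hk0 | hks
          · exfalso; apply hy0; rw [← hk]; simp [ha', hk0, hhh0]
          have habs : |a' k| = |a k| - s := by
            rcases le_abs.mp hks with h | h
            · have : a' k = a k - s := by
                simp only [ha', hhAux]
                rw [max_eq_left (le_trans (min_le_left _ _) (by linarith))]
              rw [this, abs_of_nonneg (by linarith), abs_of_nonneg (by linarith)]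
            · have : a' k = a k + s := by
                simp only [ha', hhAux]
                rw [min_eq_right (by linarith), max_eq_right (by linarith)]
              rw [this, abs_of_nonpos (by linarith), abs_of_nonpos (by linarith)]; ring
          refine Finset.mem_erase.mpr ⟨hy0, Finset.mem_image.mpr
            ⟨|a k|, ?_, by show |a k| - s = y; rw [← hk, habs]⟩⟩
          refine Finset.mem_erase.mpr ⟨?_, Finset.mem_image.mpr ⟨k, Finset.mem_univ k, rfl⟩⟩
          intro hc; rw [hc] at hks; linarith
        have hinj : Set.InjOn (fun y => y - s) ↑T := fun x _ y _ h => by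
          simpa using h
        have h0mem : (0:ℝ) ∈ T.image (fun y => y - s) :=
          Finset.mem_image.mpr ⟨s, hsT, by show s - s = 0; ring⟩
        calc ((Finset.image (fun i => |a' i|) Finset.univ).erase 0).card
            ≤ ((T.image (fun y => y - s)).erase 0).card := Finset.card_le_card hsubset
          _ = (T.image (fun y => y - s)).card - 1 := Finset.card_erase_of_mem h0mem
          _ = T.card - 1 := by rw [Finset.card_image_of_injOn hinj]
          _ ≤ n := by omega
      -- pointwise decomposition of downOrd
      have hrest : ∀ (b : Fin m → ℝ) (g : ℝ → ℝ) (Q : Finset (Fin m)),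
          restrictTo (fun i => g (b i)) Q = g ∘ restrictTo b Q := by
        intro b g Q; rfl
      have hfdecomp : f a = f a' + s * f v := by
        rw [hf, hf, hf, Finset.mul_sum, ← Finset.sum_add_distrib]
        refine Finset.sum_congr rfl (fun i _ => ?_)
        rw [Finset.mul_sum, ← Finset.sum_add_distrib]
        refine Finset.sum_congr rfl (fun j _ => ?_)
        have hva : downOrd (restrictTo v (P i)) j = ggAux s (downOrd (restrictTo a (P i)) j) := by
          rw [hv, hrest a (ggAux s) (P i), downOrd_comp _ (ggAux_mono hs0)]
        have ha'a : downOrd (restrictTo a' (P i)) j = hhAux s (downOrd (restrictTo a (P i)) j) := by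
          rw [ha', hrest a (hhAux s) (P i), downOrd_comp _ (hhAux_mono s)]
        have hval : ∃ k, downOrd (restrictTo a (P i)) j = a k := ⟨_, rfl⟩
        obtain ⟨k, hk⟩ := hval
        have hid := hh_add_gg hs0 (hk ▸ hentry k)
        rw [hva, ha'a]
        linear_combination (-(α i (j : ℕ))) * hid
      -- combine
      have hφv : φ v ≤ f v := hpm v hvU (by
        intro i
        simp only [hv, ggAux]
        split_ifs <;> norm_num)
      have hφa' : φ a' ≤ f a' := ih a' ha'U hcard'
      have hsvU : s • v ∈ U := by
        have := hUmem v v s 0 hvU hvU; simpa using this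
      calc φ a = φ (a' + s • v) := by rw [← hdecomp]
        _ ≤ φ a' + φ (s • v) := hsub a' ha'U (s • v) hsvU
        _ = φ a' + s * φ v := by rw [hφhom s hs0 v hvU]
        _ ≤ f a' + s * f v := by
            have := mul_le_mul_of_nonneg_left hφv hs0.le
            linarith
        _ = f a := hfdecomp.symm
  intro a ha
  exact key _ a ha le_rfl
end

section
/- Let m ∈ ℕ, 𝒫 ⊆ [m], and U = {Σ_{i∈𝒫} a_i e_i : a_i ≥ 0} be the nonnegative orthant of the coordinate subspace of ℝ^m supported on 𝒫. Let φ : U → ℝ be convex and positively homogeneous, and let f : U → ℝ be concave and positively homogeneous. Then the following are equivalent: (1) φ(a) ≤ f(a) for every a ∈ U; (2) φ(a) ≤ f(a) for every a ∈ U all of whose coordinates lie in {0, 1}. -/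
theorem convex_le_concave_iff_on_zero_one_vectors {m : ℕ}
    (Psupp : Finset (Fin m)) (U : Set (Fin m → ℝ))
    (hU : U = {a | (∀ i, i ∉ Psupp → a i = 0) ∧ ∀ i, 0 ≤ a i})
    (φ f : (Fin m → ℝ) → ℝ)
    (hφconv : ConvexOn ℝ U φ)
    (hφhom : ∀ α : ℝ, 0 < α → ∀ v ∈ U, φ (α • v) = α * φ v)
    (hfconc : ConcaveOn ℝ U f)
    (hfhom : ∀ α : ℝ, 0 < α → ∀ v ∈ U, f (α • v) = α * f v) :
    (∀ a ∈ U, φ a ≤ f a) ↔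
      (∀ a ∈ U, (∀ i, a i = 0 ∨ a i = 1) → φ a ≤ f a) := by
  constructor
  · intro h a ha _
    exact h a ha
  · intro h2
    suffices H : ∀ n : ℕ, ∀ a : Fin m → ℝ, a ∈ U →
        (Finset.univ.filter (fun i => a i ≠ 0)).card ≤ n → φ a ≤ f a by
      intro a ha
      exact H _ a ha le_rfl
    intro n
    induction n with
    | zero =>
      intro a ha hc
      have hzero : ∀ i, a i = 0 := by
        intro i
        by_contra hi
        have hmem : i ∈ Finset.univ.filter (fun i => a i ≠ 0) := by simp [hi]
        have := Finset.card_pos.mpr ⟨i, hmem⟩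
        omega
      exact h2 a ha (fun i => Or.inl (hzero i))
    | succ n ih =>
      intro a ha hc
      have haU := ha
      rw [hU] at haU
      obtain ⟨hsupp, hnn⟩ := haU
      set S := Finset.univ.filter (fun i => a i ≠ 0) with hSdef
      rcases S.eq_empty_or_nonempty with hSe | hSne
      · have hzero : ∀ i, a i = 0 := by
          intro i
          by_contra hi
          have hmem : i ∈ S := by simp [hSdef, hi]
          rw [hSe] at hmem
          exact absurd hmem (Finset.notMem_empty i)
        exact h2 a ha (fun i => Or.inl (hzero i))
      · set t := S.inf' hSne a with htdef
        obtain ⟨i0, hi0S, hi0⟩ := S.exists_mem_eq_inf' hSne a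
        have hmemS : ∀ i, i ∈ S ↔ a i ≠ 0 := by intro i; simp [hSdef]
        have htle : ∀ i ∈ S, t ≤ a i := fun i hi => Finset.inf'_le a hi
        have ht_pos : 0 < t := by
          have : t = a i0 := hi0
          rw [this]
          exact lt_of_le_of_ne (hnn i0) (Ne.symm ((hmemS i0).mp hi0S))
        set χ : Fin m → ℝ := fun i => if i ∈ S then 1 else 0 with hχdef
        set b : Fin m → ℝ := fun i => a i - t * χ i with hbdef
        have hSPsupp : ∀ i ∈ S, i ∈ Psupp := by
          intro i hi
          by_contra hnp
          exact ((hmemS i).mp hi) (hsupp i hnp)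
        have hχU : χ ∈ U := by
          rw [hU]
          refine ⟨fun i hi => ?_, fun i => ?_⟩
          · simp only [hχdef]
            rw [if_neg (fun hiS => hi (hSPsupp i hiS))]
          · simp only [hχdef]
            split <;> norm_num
        have hanotS : ∀ i, i ∉ S → a i = 0 := by
          intro i hi
          by_contra hne
          exact hi ((hmemS i).mpr hne)
        have hbU : b ∈ U := by
          rw [hU]
          refine ⟨fun i hi => ?_, fun i => ?_⟩
          · have hiS : i ∉ S := fun hiS => hi (hSPsupp i hiS)
            simp [hbdef, hχdef, hiS, hsupp i hi]
          · by_cases hiS : i ∈ S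
            · simp only [hbdef, hχdef, if_pos hiS, mul_one]
              linarith [htle i hiS]
            · simp [hbdef, hχdef, hiS, hanotS i hiS]
        have hbcard : (Finset.univ.filter (fun i => b i ≠ 0)).card ≤ n := by
          have hsub : (Finset.univ.filter (fun i => b i ≠ 0)) ⊆ S.erase i0 := by
            intro i hi
            simp only [Finset.mem_filter, Finset.mem_univ, true_and] at hi
            have hiS : i ∈ S := by
              by_contra hiS
              exact hi (by simp [hbdef, hχdef, hiS, hanotS i hiS])
            refine Finset.mem_erase.mpr ⟨?_, hiS⟩
            rintro rfl
            exact hi (by simp [hbdef, hχdef, hiS, ← hi0, htdef])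
          have := Finset.card_le_card hsub
          have := Finset.card_erase_le (a := i0) (s := S)
          have hcardS : S.card ≤ n + 1 := hc
          have : (S.erase i0).card = S.card - 1 := Finset.card_erase_of_mem hi0S
          omega
        -- scaled vectors
        have hx : (2 * t) • χ ∈ U := by
          rw [hU]
          rw [hU] at hχU
          refine ⟨fun i hi => ?_, fun i => ?_⟩
          · simp [hχU.1 i hi]
          · have := hχU.2 i
            simp only [Pi.smul_apply, smul_eq_mul]
            positivity
        have hy : (2 : ℝ) • b ∈ U := by
          rw [hU]
          rw [hU] at hbU
          refine ⟨fun i hi => ?_, fun i => ?_⟩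
          · simp [hbU.1 i hi]
          · have := hbU.2 i
            simp only [Pi.smul_apply, smul_eq_mul]
            positivity
        have ha_eq : a = (1/2 : ℝ) • ((2 * t) • χ) + (1/2 : ℝ) • ((2 : ℝ) • b) := by
          funext i
          simp only [Pi.add_apply, Pi.smul_apply, smul_eq_mul, hbdef]
          ring
        have hφineq : φ a ≤ t * φ χ + φ b := by
          have hconv := hφconv.2 hx hy (by norm_num : (0:ℝ) ≤ 1/2)
            (by norm_num : (0:ℝ) ≤ 1/2) (by norm_num : (1/2 : ℝ) + 1/2 = 1)
          rw [← ha_eq] at hconv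
          rw [hφhom (2 * t) (by linarith) χ hχU, hφhom 2 (by norm_num) b hbU] at hconv
          simp only [smul_eq_mul] at hconv
          linarith
        have hfineq : t * f χ + f b ≤ f a := by
          have hconc := hfconc.2 hx hy (by norm_num : (0:ℝ) ≤ 1/2)
            (by norm_num : (0:ℝ) ≤ 1/2) (by norm_num : (1/2 : ℝ) + 1/2 = 1)
          rw [← ha_eq] at hconc
          rw [hfhom (2 * t) (by linarith) χ hχU, hfhom 2 (by norm_num) b hbU] at hconc
          simp only [smul_eq_mul] at hconc
          linarith
        have hχ01 : ∀ i, χ i = 0 ∨ χ i = 1 := by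
          intro i
          simp only [hχdef]
          split
          · exact Or.inr rfl
          · exact Or.inl rfl
        have h1 : φ χ ≤ f χ := h2 χ hχU hχ01
        have h3 : φ b ≤ f b := ih b hbU hbcard
        have : t * φ χ ≤ t * f χ := mul_le_mul_of_nonneg_left h1 (le_of_lt ht_pos)
        linarith
end

section
/- Let n ∈ ℕ, P ⊆ [n] × [n], and let V = {Σ_{(i,j)∈P} ω_{ij} E_{ij} : ω_{ij} ≥ 0} be the cone of entrywise-nonnegative n×n matrices supported on P. Let ψ : V → ℝ be convex and positively homogeneous, and for given real numbers α_1, …, α_{n²} define f : V → ℝ by f(A) = Σ_{i=1}^{n²} α_i A_{↓i}, where A_{↓1} ≥ ⋯ ≥ A_{↓n²} is the decreasing rearrangement of all entries of A. Then the following are equivalent: (1) ψ(A) ≤ f(A) for every A ∈ V; (2) ψ(A) ≤ f(A) for every A ∈ V all of whose entries lie in {0, 1}. -/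
/-- All `n²` entries of a matrix, listed as a tuple indexed by `Fin (n * n)`. -/
def entriesVec {n : ℕ} (A : Matrix (Fin n) (Fin n) ℝ) : Fin (n * n) → ℝ :=
  fun k => A (finProdFinEquiv.symm k).1 (finProdFinEquiv.symm k).2

/-! Sort the entries of `A ∈ V` as `a₀ ≥ a₁ ≥ ⋯ ≥ a_{N-1} ≥ a_N := 0` and let `B_k` be the
0-1 matrix marking the positions of `a₀, …, a_k`. Then `A = ∑ₖ (a_k - a_{k+1}) • B_k` with
nonnegative weights, each `B_k` of positive weight lies in `V`, and because the `B_k` are nested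
along the order of the entries of `A`, the sorted entries of `B_k` are `1, …, 1, 0, …, 0`, so that
`f A = ∑ₖ (a_k - a_{k+1}) f(B_k)`. Jensen's inequality with homogeneity gives
`ψ A ≤ ∑ₖ (a_k - a_{k+1}) ψ(B_k)`, and the bound on 0-1 matrices finishes the proof. -/

open Finset

namespace downOrd

variable {p : ℕ} (x : Fin p → ℝ)

theorem comp_perm (σ : Equiv.Perm (Fin p)) : downOrd (x ∘ σ) = downOrd x :=
  funext fun j => congrFun (Tuple.comp_perm_comp_sort_eq_comp_sort (σ := σ) (f := x)) j.rev

theorem antitone : Antitone (downOrd x) := fun _ _ hij =>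
  Tuple.monotone_sort x (Fin.rev_le_rev.mpr hij)

theorem of_antitone {x : Fin p → ℝ} (h : Antitone x) : downOrd x = x := by
  have hmono : Monotone (x ∘ Fin.revPerm) := fun _ _ hab => h (Fin.rev_le_rev.mpr hab)
  funext j
  simpa [downOrd] using
    congrFun ((Tuple.comp_sort_eq_comp_iff_monotone (σ := Fin.revPerm)).mpr hmono).symm j.rev

end downOrd

theorem sum_ite_le_sub_succ {p : ℕ} (D : ℕ → ℝ) (hD : D p = 0) (i : Fin p) :
    ∑ k : Fin p, (if i ≤ k then D k - D (k + 1) else 0) = D i := by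
  have hIco : (range p).filter ((i : ℕ) ≤ ·) = Ico (i : ℕ) p := by
    ext k; simp only [mem_filter, mem_range, mem_Ico]; omega
  have htel := sum_Ico_sub D i.is_lt.le
  simp only [Fin.le_iff_val_le_val]
  rw [Fin.sum_univ_eq_sum_range (fun k => if (i : ℕ) ≤ k then D k - D (k + 1) else 0),
    ← sum_filter, hIco]
  simp only [← neg_sub (D (_ + 1)), sum_neg_distrib, htel, hD]
  ring

section Layers

variable {p : ℕ} (x : Fin p → ℝ)

/-- The position of each index in the decreasing rearrangement of `x`. -/
noncomputable def downRank : Equiv.Perm (Fin p) :=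
  (Tuple.sort x).symm.trans Fin.revPerm

theorem downOrd_downRank (m : Fin p) : downOrd x (downRank x m) = x m := by
  simp [downOrd, downRank]

/-- The indicator of the `k + 1` largest entries of `x`, ties being broken by `Tuple.sort`. -/
noncomputable def topIndicator (k : Fin p) : Fin p → ℝ :=
  fun m => if downRank x m ≤ k then 1 else 0

theorem downOrd_topIndicator (k : Fin p) :
    downOrd (topIndicator x k) = fun i => if i ≤ k then 1 else 0 := by
  have hanti : Antitone fun i : Fin p => if i ≤ k then (1 : ℝ) else 0 := by
    intro a b hab
    by_cases hb : b ≤ k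
    · simp [hb, hab.trans hb]
    · by_cases ha : a ≤ k <;> simp [ha, hb]
  exact (downOrd.comp_perm _ (downRank x)).trans (downOrd.of_antitone hanti)

noncomputable def downOrdExt (k : ℕ) : ℝ :=
  if h : k < p then downOrd x ⟨k, h⟩ else 0

theorem downOrdExt_coe (k : Fin p) : downOrdExt x k = downOrd x k :=
  dif_pos k.is_lt

noncomputable def downGap (k : Fin p) : ℝ :=
  downOrdExt x k - downOrdExt x (k + 1)

theorem sum_ite_le_downGap (i : Fin p) :
    ∑ k, (if i ≤ k then downGap x k else 0) = downOrd x i :=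
  (sum_ite_le_sub_succ _ (dif_neg (lt_irrefl p)) i).trans (downOrdExt_coe x i)

variable {x}

theorem downOrdExt_nonneg (hx : ∀ m, 0 ≤ x m) (k : ℕ) : 0 ≤ downOrdExt x k := by
  unfold downOrdExt
  split_ifs
  exacts [hx _, le_rfl]

theorem downGap_nonneg (hx : ∀ m, 0 ≤ x m) (k : Fin p) : 0 ≤ downGap x k := by
  rw [downGap, sub_nonneg, downOrdExt_coe, downOrdExt]
  split_ifs
  · exact downOrd.antitone x (Fin.mk_le_mk.2 k.val.le_succ)
  · exact hx _

theorem topIndicator_eq_zero (hx : ∀ m, 0 ≤ x m) {k m : Fin p} (hk : 0 < downGap x k)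
    (hm : x m = 0) : topIndicator x k m = 0 := by
  have hpos : 0 < downOrd x k := by
    have := downOrdExt_nonneg hx (k + 1)
    rw [downGap, downOrdExt_coe] at hk
    linarith
  exact if_neg fun hle =>
    (downOrd_downRank x m ▸ hpos.trans_le (downOrd.antitone x hle)).ne' hm

theorem topIndicator_eq_zero_or_one (k m : Fin p) :
    topIndicator x k m = 0 ∨ topIndicator x k m = 1 := by
  unfold topIndicator
  split_ifs <;> simp

variable (x)

theorem sum_downGap_smul_topIndicator : ∑ k, downGap x k • topIndicator x k = x := by
  funext m
  simp only [Finset.sum_apply, Pi.smul_apply, topIndicator, smul_eq_mul, mul_ite, mul_one,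
    mul_zero, sum_ite_le_downGap, downOrd_downRank]

theorem sum_mul_downOrd_eq_sum_downGap_mul (α : Fin p → ℝ) :
    ∑ i, α i * downOrd x i = ∑ k, downGap x k * ∑ i, α i * downOrd (topIndicator x k) i := by
  simp only [downOrd_topIndicator, mul_sum, ← sum_ite_le_downGap x]
  rw [sum_comm]
  refine sum_congr rfl fun i _ => sum_congr rfl fun k _ => ?_
  split_ifs <;> ring

end Layers

theorem ConvexOn.map_sum_le_sum_mul_of_homogeneous {E ι : Type*} [AddCommGroup E] [Module ℝ E]
    {s : Set E} {ψ : E → ℝ} (hψ : ConvexOn ℝ s ψ) (h0 : (0 : E) ∈ s)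
    (hhom : ∀ a : ℝ, 0 < a → ∀ x ∈ s, ψ (a • x) = a * ψ x)
    (t : Finset ι) {c : ι → ℝ} {x : ι → E} (hc : ∀ i ∈ t, 0 ≤ c i)
    (hx : ∀ i ∈ t, 0 < c i → x i ∈ s) :
    ψ (∑ i ∈ t, c i • x i) ≤ ∑ i ∈ t, c i * ψ (x i) := by
  have hψ0 : ψ 0 = 0 := by
    have h := hhom 2 two_pos 0 h0
    rw [smul_zero] at h
    linarith
  have hpos {i : ι} (hi : i ∈ t) (hne : c i ≠ 0) : 0 < c i := (hc i hi).lt_of_ne' hne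
  rw [← sum_filter_of_ne fun i hi h => hpos hi (left_ne_zero_of_smul h),
    ← sum_filter_of_ne fun i hi h => hpos hi (left_ne_zero_of_mul h)]
  set t' := t.filter (0 < c ·)
  rcases t'.eq_empty_or_nonempty with ht | ht
  · simp [ht, hψ0]
  have hw : ∀ i ∈ t', 0 < c i := fun i hi => (mem_filter.1 hi).2
  have hC : 0 < ∑ i ∈ t', c i := sum_pos hw ht
  have hmem : ∀ i ∈ t', x i ∈ s := fun i hi => hx i (mem_filter.1 hi).1 (hw i hi)
  have hrescale : ∑ i ∈ t', c i • x i = (∑ i ∈ t', c i) • t'.centerMass c x := by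
    rw [centerMass, smul_smul, mul_inv_cancel₀ hC.ne', one_smul]
  rw [hrescale, hhom _ hC _ (hψ.1.centerMass_mem (fun i hi => (hw i hi).le) hC hmem)]
  calc (∑ i ∈ t', c i) * ψ (t'.centerMass c x)
      ≤ (∑ i ∈ t', c i) * t'.centerMass c (ψ ∘ x) :=
        mul_le_mul_of_nonneg_left (hψ.map_centerMass_le (fun i hi => (hw i hi).le) hC hmem) hC.le
    _ = ∑ i ∈ t', c i * ψ (x i) := by
        rw [centerMass, smul_eq_mul, ← mul_assoc, mul_inv_cancel₀ hC.ne', one_mul]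
        rfl

theorem entriesVec_finProdFinEquiv {n : ℕ} (A : Matrix (Fin n) (Fin n) ℝ) (i j : Fin n) :
    entriesVec A (finProdFinEquiv (i, j)) = A i j := by
  simp [entriesVec]

def entriesVecEquiv (n : ℕ) : Matrix (Fin n) (Fin n) ℝ ≃ₗ[ℝ] (Fin (n * n) → ℝ) where
  toFun := entriesVec
  invFun v := Matrix.of fun i j => v (finProdFinEquiv (i, j))
  map_add' _ _ := rfl
  map_smul' _ _ := rfl
  left_inv A := by ext i j; exact entriesVec_finProdFinEquiv A i j
  right_inv v := by
    ext k
    simp only [entriesVec, Matrix.of_apply, Prod.mk.eta, Equiv.apply_symm_apply]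

theorem entriesVecEquiv_apply {n : ℕ} (A : Matrix (Fin n) (Fin n) ℝ) :
    entriesVecEquiv n A = entriesVec A := rfl

theorem entriesVecEquiv_symm_apply {n : ℕ} (v : Fin (n * n) → ℝ) (i j : Fin n) :
    (entriesVecEquiv n).symm v i j = v (finProdFinEquiv (i, j)) := rfl

theorem matrix_convex_bound_iff_on_zero_one_matrices_entries {n : ℕ}
    (P : Finset (Fin n × Fin n))
    (V : Set (Matrix (Fin n) (Fin n) ℝ))
    (hV : V = {A | (∀ p : Fin n × Fin n, p ∉ P → A p.1 p.2 = 0) ∧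
      ∀ i j, 0 ≤ A i j})
    (ψ : Matrix (Fin n) (Fin n) ℝ → ℝ)
    (hψconv : ConvexOn ℝ V ψ)
    (hψhom : ∀ α : ℝ, 0 < α → ∀ A ∈ V, ψ (α • A) = α * ψ A)
    (α : Fin (n * n) → ℝ)
    (f : Matrix (Fin n) (Fin n) ℝ → ℝ)
    (hf : ∀ A, f A = ∑ i : Fin (n * n), α i * downOrd (entriesVec A) i) :
    (∀ A ∈ V, ψ A ≤ f A) ↔
      (∀ A ∈ V, (∀ i j, A i j = 0 ∨ A i j = 1) → ψ A ≤ f A) := by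
  refine ⟨fun h A hA _ => h A hA, fun h01 A hA => ?_⟩
  rw [hV] at hA
  set x := entriesVec A
  have hx : ∀ m, 0 ≤ x m := fun m => hA.2 _ _
  let B k := (entriesVecEquiv n).symm (topIndicator x k)
  have hA_eq : A = ∑ k, downGap x k • B k := by
    simp only [B, ← map_smul, ← map_sum, sum_downGap_smul_topIndicator]
    exact ((entriesVecEquiv n).symm_apply_apply A).symm
  have hB01 : ∀ k i j, B k i j = 0 ∨ B k i j = 1 := fun k i j =>
    topIndicator_eq_zero_or_one _ _
  have hBmem : ∀ k, 0 < downGap x k → B k ∈ V := fun k hk => hV ▸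
    ⟨fun q hq => topIndicator_eq_zero hx hk ((entriesVec_finProdFinEquiv A _ _).trans (hA.1 q hq)),
      fun i j => (hB01 k i j).elim (·.ge) (· ▸ zero_le_one)⟩
  have hfB : ∀ k, f (B k) = ∑ i, α i * downOrd (topIndicator x k) i := fun k => by
    rw [hf, ← entriesVecEquiv_apply, LinearEquiv.apply_symm_apply]
  calc ψ A ≤ ∑ k, downGap x k * ψ (B k) := hA_eq ▸ hψconv.map_sum_le_sum_mul_of_homogeneous
        (hV ▸ ⟨fun _ _ => rfl, fun _ _ => le_rfl⟩) hψhom _ (fun k _ => downGap_nonneg hx k)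
        fun k _ => hBmem k
    _ ≤ ∑ k, downGap x k * f (B k) := sum_le_sum fun k _ => by
        rcases (downGap_nonneg hx k).eq_or_lt with h | h
        · simp [← h]
        · exact mul_le_mul_of_nonneg_left (h01 _ (hBmem k h) (hB01 k)) h.le
    _ = f A := by
        simp only [hfB, hf]
        exact (sum_mul_downOrd_eq_sum_downGap_mul x α).symm
end

section
/- Let A = [ω_{ij}] be an n×n symmetric real matrix with zero diagonal, and let ω_1 ≥ ω_2 ≥ ⋯ ≥ ω_{n²−n} be the decreasing order of the n²−n off-diagonal entries (ω_{ij})_{i≠j}. Then for every k ∈ [n−1] and every orthonormal family u_1, …, u_k of vectors in ℝ^n each orthogonal to the all-ones vector, Σ_{i=1}^k u_iᵀ L_A u_i ≤ Σ_{i=1}^{kn} ω_i. Equivalently, the sum of the k largest Laplacian eigenvalues of A on the orthogonal complement of the all-ones vector is at most Σ_{i=1}^{kn} ω_i. -/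
/-!
With `q i j = ½ ∑ₜ (uₜ i - uₜ j)²`, symmetry of `A` gives `∑ₜ uₜᵀ L_A uₜ = ∑ A i j * q i j`.
Bessel's inequality for `eᵢ - eⱼ` puts every `q i j` in `[0, 1]`, and since each `uₜ` is a unit
vector with zero coordinate sum, the `q i j` add up to `k n`. A combination of the off-diagonal
entries with weights in `[0, 1]` of total mass `k n` is at most the sum of the `k n` largest ones.
-/

open Matrix

/-- The Laplacian matrix of a weighted graph with (symmetric, zero-diagonal)
adjacency matrix `A`: `L_A = D - A` where `D` is the diagonal matrix of row sums. -/
def lap {n : ℕ} (A : Matrix (Fin n) (Fin n) ℝ) : Matrix (Fin n) (Fin n) ℝ :=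
  Matrix.diagonal (fun i => ∑ j, A i j) - A

open Finset

theorem lap_mulVec_apply {n : ℕ} (A : Matrix (Fin n) (Fin n) ℝ) (x : Fin n → ℝ) (i : Fin n) :
    (lap A *ᵥ x) i = ∑ j, A i j * (x i - x j) := by
  rw [lap, sub_mulVec, Pi.sub_apply, mulVec_diagonal]
  simp only [mulVec, dotProduct, sum_mul, mul_sub, sum_sub_distrib]

theorem dotProduct_lap_mulVec {n : ℕ} {A : Matrix (Fin n) (Fin n) ℝ} (hA : A.IsSymm)
    (x : Fin n → ℝ) : x ⬝ᵥ lap A *ᵥ x = (∑ i, ∑ j, A i j * (x i - x j) ^ 2) / 2 := by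
  have h : x ⬝ᵥ lap A *ᵥ x = ∑ i, ∑ j, x i * (A i j * (x i - x j)) := by
    simp only [dotProduct, lap_mulVec_apply, mul_sum]
  have hswap : x ⬝ᵥ lap A *ᵥ x = ∑ i, ∑ j, x j * (A i j * (x j - x i)) := by
    rw [h, sum_comm]
    simp only [hA.apply]
  rw [eq_div_iff two_ne_zero, mul_two]
  nth_rewrite 1 [h]
  rw [hswap, ← sum_add_distrib]
  exact sum_congr rfl fun i _ => by rw [← sum_add_distrib]; exact sum_congr rfl fun j _ => by ring

theorem sum_sum_sub_sq {ι : Type*} [Fintype ι] (x : ι → ℝ) :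
    ∑ i, ∑ j, (x i - x j) ^ 2 = 2 * (Fintype.card ι * ∑ i, x i ^ 2 - (∑ i, x i) ^ 2) := by
  simp only [sub_sq, sum_add_distrib, sum_sub_distrib, sum_const, card_univ, nsmul_eq_mul,
    ← mul_sum, ← sum_mul, mul_assoc, sq (∑ i, x i)]
  ring

/-- Half the squared distance between rows `i` and `j` of the matrix whose columns are the `u t`. -/
noncomputable def halfSqDist {κ ι : Type*} [Fintype κ] (u : κ → ι → ℝ) (i j : ι) : ℝ :=
  (∑ t, (u t i - u t j) ^ 2) / 2

section halfSqDist

variable {κ ι : Type*} [Fintype κ] {u : κ → ι → ℝ}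

@[simp]
theorem halfSqDist_self (i : ι) : halfSqDist u i i = 0 := by
  simp [halfSqDist]

theorem halfSqDist_nonneg (i j : ι) : 0 ≤ halfSqDist u i j := by
  unfold halfSqDist
  positivity

/-- Bessel's inequality for `eᵢ - eⱼ`, whose squared norm is `2`. -/
theorem halfSqDist_le_one [DecidableEq κ] [Fintype ι] [DecidableEq ι]
    (horth : ∀ s t, u s ⬝ᵥ u t = if s = t then 1 else 0) (i j : ι) : halfSqDist u i j ≤ 1 := by
  rcases eq_or_ne i j with rfl | hij
  · simp
  have hw : Orthonormal ℝ fun t => WithLp.toLp 2 (u t) :=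
    orthonormal_iff_ite.mpr fun s t => by
      rw [EuclideanSpace.inner_toLp_toLp, star_trivial, dotProduct_comm, horth]
  set x : EuclideanSpace ℝ ι := EuclideanSpace.single i 1 - EuclideanSpace.single j 1
  have hx : ‖x‖ ^ 2 = 2 := by
    rw [norm_sub_sq_real, EuclideanSpace.inner_single_left]
    norm_num [hij.symm]
  have hbessel : ∑ t, (u t i - u t j) ^ 2 ≤ 2 :=
    calc ∑ t, (u t i - u t j) ^ 2 = ∑ t, ‖inner ℝ (WithLp.toLp 2 (u t)) x‖ ^ 2 := by
          simp [x, inner_sub_right, EuclideanSpace.inner_single_right]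
      _ ≤ 2 := hx ▸ hw.sum_inner_products_le x
  rw [halfSqDist]
  linarith

theorem sum_sum_halfSqDist [Fintype ι] (hnorm : ∀ t, u t ⬝ᵥ u t = 1) (hsum : ∀ t, ∑ i, u t i = 0) :
    ∑ i, ∑ j, halfSqDist u i j = Fintype.card κ * Fintype.card ι := by
  have hnorm' : ∀ t, ∑ i, u t i ^ 2 = 1 := fun t => by simpa [dotProduct, sq] using hnorm t
  have hswap : ∑ i, ∑ j, halfSqDist u i j = ∑ t, (∑ i, ∑ j, (u t i - u t j) ^ 2) / 2 := by
    simp only [halfSqDist, ← sum_div]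
    exact congrArg (· / 2) ((sum_congr rfl fun i _ => sum_comm).trans sum_comm)
  simp [hswap, sum_sum_sub_sq, hnorm', hsum]

theorem sum_dotProduct_lap_mulVec {n : ℕ} {A : Matrix (Fin n) (Fin n) ℝ} (hA : A.IsSymm)
    (u : κ → Fin n → ℝ) : ∑ t, u t ⬝ᵥ lap A *ᵥ u t = ∑ i, ∑ j, A i j * halfSqDist u i j := by
  rw [sum_congr rfl fun t _ => dotProduct_lap_mulVec hA (u t)]
  simp only [halfSqDist, mul_div_assoc', mul_sum, ← sum_div]
  rw [sum_comm, sum_congr rfl fun i _ => sum_comm]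

end halfSqDist

theorem sum_equiv_offDiag {ι α M : Type*} [Fintype ι] [Fintype α] [AddCommMonoid M]
    (e : α ≃ {p : ι × ι // p.1 ≠ p.2}) (f : ι → ι → M) (hf : ∀ i, f i i = 0) :
    ∑ a, f (e a).1.1 (e a).1.2 = ∑ i, ∑ j, f i j := by
  classical
  rw [e.sum_comp (fun p => f p.1.1 p.1.2), ← Fintype.sum_prod_type',
    ← sum_subtype {p | p.1 ≠ p.2} (by simp) (fun p : ι × ι => f p.1 p.2)]
  exact sum_filter_of_ne fun p _ hp h => hp (h ▸ hf p.1)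

/-- The fractional knapsack bound. -/
theorem sum_mul_le_sum_of_threshold {ι : Type*} [Fintype ι] (s : Finset ι) {ω v : ι → ℝ}
    {t : ℝ} (hs : ∀ i ∈ s, t ≤ ω i) (hsc : ∀ i ∉ s, ω i ≤ t) (h0 : ∀ i, 0 ≤ v i)
    (h1 : ∀ i, v i ≤ 1) (hsum : ∑ i, v i = #s) : ∑ i, ω i * v i ≤ ∑ i ∈ s, ω i := by
  classical
  calc ∑ i, ω i * v i
      ≤ ∑ i, ((if i ∈ s then ω i else 0) + t * (v i - if i ∈ s then 1 else 0)) := by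
        refine sum_le_sum fun i _ => ?_
        split_ifs with hi
        · nlinarith [hs i hi, h1 i]
        · nlinarith [hsc i hi, h0 i]
    _ = ∑ i ∈ s, ω i := by
        rw [sum_add_distrib, ← mul_sum, sum_sub_distrib, hsum, sum_ite_mem, univ_inter]
        simp

theorem sum_mul_le_sum_filter_lt_of_antitone {m K : ℕ} {ω v : Fin m → ℝ} (hanti : Antitone ω)
    (h0 : ∀ i, 0 ≤ v i) (h1 : ∀ i, v i ≤ 1) (hsum : ∑ i, v i = K) :
    ∑ i, ω i * v i ≤ ∑ i ∈ univ.filter (fun i : Fin m => (i : ℕ) < K), ω i := by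
  rcases m with _ | m
  · simp
  have hKm : K ≤ m + 1 := by
    have : ∑ i, v i ≤ ∑ _i : Fin (m + 1), (1 : ℝ) := sum_le_sum fun i _ => h1 i
    simp only [hsum, sum_const, card_univ, Fintype.card_fin, nsmul_eq_mul, mul_one] at this
    exact_mod_cast this
  refine sum_mul_le_sum_of_threshold _ (t := ω ⟨K - 1, by omega⟩) (fun i hi => hanti ?_)
    (fun i hi => hanti ?_) h0 h1 ?_
  · simp only [mem_filter, mem_univ, true_and] at hi
    exact Fin.le_def.mpr (show (i : ℕ) ≤ K - 1 by omega)
  · simp only [mem_filter, mem_univ, true_and, not_lt] at hi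
    exact Fin.le_def.mpr (show K - 1 ≤ (i : ℕ) by omega)
  · rw [hsum, Fin.card_filter_val_lt, min_eq_right hKm]

theorem sum_k_largest_lap_eigenvalues_le_sum_kn_largest_weights_general {n : ℕ}
    (A : Matrix (Fin n) (Fin n) ℝ) (hsym : A.IsSymm)
    -- `ω` lists the off-diagonal entries of `A` in decreasing order
    (ω : Fin (n * n - n) → ℝ) (hmono : Antitone ω)
    (e : Fin (n * n - n) ≃ {p : Fin n × Fin n // p.1 ≠ p.2})
    (hω : ∀ i, ω i = A (e i).1.1 (e i).1.2)
    (k : ℕ)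
    (u : Fin k → Fin n → ℝ)
    (horth : ∀ i j, u i ⬝ᵥ u j = if i = j then 1 else 0)
    (hones : ∀ i, ∑ l, u i l = 0) :
    ∑ i, u i ⬝ᵥ (lap A).mulVec (u i) ≤
      ∑ i ∈ Finset.univ.filter (fun i : Fin (n * n - n) => (i : ℕ) < k * n), ω i := by
  have hweights : ∑ a, halfSqDist u (e a).1.1 (e a).1.2 = (k * n : ℕ) := by
    rw [sum_equiv_offDiag e _ halfSqDist_self,
      sum_sum_halfSqDist (fun t => by simp [horth]) hones]
    simp
  calc ∑ t, u t ⬝ᵥ lap A *ᵥ u t = ∑ i, ∑ j, A i j * halfSqDist u i j :=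
        sum_dotProduct_lap_mulVec hsym u
    _ = ∑ a, ω a * halfSqDist u (e a).1.1 (e a).1.2 := by
        rw [← sum_equiv_offDiag e _ fun i => by simp]
        simp only [hω]
    _ ≤ _ := sum_mul_le_sum_filter_lt_of_antitone hmono (fun _ => halfSqDist_nonneg _ _)
        (fun _ => halfSqDist_le_one horth _ _) hweights

theorem sum_k_largest_lap_eigenvalues_le_sum_kn_largest_weights {n : ℕ}
    (A : Matrix (Fin n) (Fin n) ℝ) (hsym : A.IsSymm) (hdiag : ∀ i, A i i = 0)
    -- `ω` lists the off-diagonal entries of `A` in decreasing order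
    (ω : Fin (n * n - n) → ℝ) (hmono : Antitone ω)
    (e : Fin (n * n - n) ≃ {p : Fin n × Fin n // p.1 ≠ p.2})
    (hω : ∀ i, ω i = A (e i).1.1 (e i).1.2)
    (k : ℕ) (hk1 : 1 ≤ k) (hk2 : k ≤ n - 1)
    (u : Fin k → Fin n → ℝ)
    (horth : ∀ i j, u i ⬝ᵥ u j = if i = j then 1 else 0)
    (hones : ∀ i, ∑ l, u i l = 0) :
    ∑ i, u i ⬝ᵥ (lap A).mulVec (u i) ≤
      ∑ i ∈ Finset.univ.filter (fun i : Fin (n * n - n) => (i : ℕ) < k * n), ω i :=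
  sum_k_largest_lap_eigenvalues_le_sum_kn_largest_weights_general A hsym ω hmono e hω k u horth
    hones
end

section
/- (Weighted Brouwer bound for trees.) Let T be a tree on n vertices with nonnegative edge weights, with adjacency matrix A supported on the edges of T, and let ω_1 ≥ ω_2 ≥ ⋯ ≥ ω_{n−1} ≥ 0 be the decreasing order of the edge weights, extended by ω_n = ⋯ = ω_{2n−1} = 0. Let e(T) = Σ_{i=1}^{n−1} ω_i be the total edge weight. Then for every k ∈ [n] and every orthonormal family u_1, …, u_k of vectors in ℝ^n, Σ_{i=1}^k u_iᵀ L_T u_i ≤ e(T) + Σ_{i=1}^{2k−1} ω_i; that is, the sum of the k largest eigenvalues of the Laplacian L_T is at most e(T) + Σ_{i=1}^{2k−1} ω_i. -/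
/-
Let `P = UᵀU` be the orthogonal projection onto the span of the `uᵢ`. Then
`∑ᵢ uᵢᵀ L uᵢ = tr (L P) = ∑_{ab ∈ E(T)} A_ab c(ab)`, where `c(ab) = (e_a - e_b)ᵀ P (e_a - e_b) ≤ 2`.
For every forest `S`, `∑_{q ∈ S} c(q) ≤ |S| + 2 ∑_{v ∈ V(S)} P_vv - 1`: for a star this is a
scalar inequality coming from `P² = P` and Cauchy–Schwarz, and any other forest splits into two
vertex-disjoint smaller forests, possibly joined by one more edge. As `tr P = k`, the `r`
heaviest edges carry total `c` at most `min (2r) (r + 2k - 1)`, and Abel summation against the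
decreasing weights gives `e(T) + ∑_{i < 2k-1} ω_i`.
-/

open Matrix

open Finset SimpleGraph

variable {V : Type*}

/-- `edgeEnergy P s(a, b) = (e_a - e_b)ᵀ P (e_a - e_b)`. -/
def edgeEnergy (P : Matrix V V ℝ) : Sym2 V → ℝ :=
  Sym2.lift ⟨fun a b => P a a + P b b - P a b - P b a, fun _ _ => by ring⟩

@[simp]
lemma edgeEnergy_mk (P : Matrix V V ℝ) (a b : V) :
    edgeEnergy P s(a, b) = P a a + P b b - P a b - P b a := rfl

section Projection

variable [Fintype V] {P : Matrix V V ℝ}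

lemma sum_mul_row_eq (hPs : P.IsSymm) (hPi : IsIdempotentElem P) (v w : V) :
    ∑ z, P v z * P w z = P v w := by
  conv_rhs => rw [← hPi.eq, mul_apply]
  simp_rw [hPs.apply]

lemma sum_sq_row_eq (hPs : P.IsSymm) (hPi : IsIdempotentElem P) (v : V) :
    ∑ z, P v z ^ 2 = P v v := by
  simpa only [sq] using sum_mul_row_eq hPs hPi v v

lemma diag_nonneg (hPs : P.IsSymm) (hPi : IsIdempotentElem P) (v : V) : 0 ≤ P v v :=
  sum_sq_row_eq hPs hPi v ▸ sum_nonneg fun _ _ => sq_nonneg _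

lemma diag_le_one (hPs : P.IsSymm) (hPi : IsIdempotentElem P) (v : V) : P v v ≤ 1 := by
  have : P v v ^ 2 ≤ P v v := sum_sq_row_eq hPs hPi v ▸
    single_le_sum (f := fun z => P v z ^ 2) (fun _ _ => sq_nonneg _) (mem_univ v)
  nlinarith [diag_nonneg hPs hPi v]

lemma sq_le_diag_mul_diag (hPs : P.IsSymm) (hPi : IsIdempotentElem P) (v w : V) :
    P v w ^ 2 ≤ P v v * P w w := by
  simpa only [sum_mul_row_eq hPs hPi, sum_sq_row_eq hPs hPi] using
    sum_mul_sq_le_sq_mul_sq univ (P v) (P w)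

lemma edgeEnergy_le_two [DecidableEq V] (hPs : P.IsSymm) (hPi : IsIdempotentElem P)
    {q : Sym2 V} (hq : ¬ q.IsDiag) : edgeEnergy P q ≤ 2 := by
  induction q using Sym2.ind with | _ a b => ?_
  have hab : a ≠ b := by simpa using hq
  have hrows : ∑ z, (P a z - P b z) ^ 2 = edgeEnergy P s(a, b) := by
    simp only [sub_sq, sum_add_distrib, sum_sub_distrib, mul_assoc, ← mul_sum,
      sum_sq_row_eq hPs hPi, sum_mul_row_eq hPs hPi, edgeEnergy_mk, hPs.apply b a]
    ring
  -- keeping the coordinates `a`, `b` only: `c ≥ α² + β² ≥ c² / 2` for `α = P a a - P a b`,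
  -- `β = P b b - P a b` and `c = α + β`
  have hpair := sum_le_sum_of_subset_of_nonneg (subset_univ {a, b})
    (f := fun z => (P a z - P b z) ^ 2) fun _ _ _ => sq_nonneg _
  rw [sum_pair hab, hrows, edgeEnergy_mk, hPs.apply b a] at hpair
  rw [edgeEnergy_mk, hPs.apply b a]
  nlinarith [sq_nonneg (P a a - P b b)]

end Projection

lemma star_scalar_bound {s x σ R : ℝ} (hs : 1 ≤ s) (hx0 : 0 ≤ x) (hx1 : x ≤ 1) (hσ : 0 ≤ σ)
    (hR : R ^ 2 ≤ s * min (x - x ^ 2) (x * σ)) : (s - 2) * x + 2 * R ≤ s - 1 + σ := by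
  rcases le_or_gt (1 - x) σ with hσx | hσx
  · -- `(s - (s - 1) x)² - 4 s (x - x²) = (s - (s + 1) x)²`
    have h : (2 * R) ^ 2 ≤ (s - (s - 1) * x) ^ 2 := by
      nlinarith [min_le_left (x - x ^ 2) (x * σ), sq_nonneg (s - (s + 1) * x)]
    have := (abs_le_of_sq_le_sq h (by nlinarith)).trans' (le_abs_self _)
    linarith
  · -- `(s - 1 + σ - (s - 2) x)² - 4 s x σ = (σ - x + (s - 1)(1 - x))² + 4 (s - 1) x (1 - x - σ)`
    have h : (2 * R) ^ 2 ≤ (s - 1 + σ - (s - 2) * x) ^ 2 := by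
      nlinarith [min_le_right (x - x ^ 2) (x * σ), sq_nonneg (σ - x + (s - 1) * (1 - x)),
        mul_nonneg (mul_nonneg (sub_nonneg.2 hs) hx0) (sub_nonneg.2 hσx.le)]
    have := (abs_le_of_sq_le_sq h (by nlinarith)).trans' (le_abs_self _)
    linarith

lemma reachable_of_mem_edge {S : Finset (Sym2 V)} {q : Sym2 V} (hq : q ∈ S) {x y : V}
    (hx : x ∈ q) (hy : y ∈ q) : (fromEdgeSet (S : Set (Sym2 V))).Reachable x y := by
  obtain rfl | hxy := eq_or_ne x y
  · rfl
  · exact Adj.reachable <| (fromEdgeSet_adj _).2 ⟨(Sym2.mem_and_mem_iff hxy).1 ⟨hx, hy⟩ ▸ hq, hxy⟩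

section EdgeSets

variable [DecidableEq V]

def edgeSupport (S : Finset (Sym2 V)) : Finset V := S.biUnion Sym2.toFinset

@[simp]
lemma mem_edgeSupport {S : Finset (Sym2 V)} {v : V} : v ∈ edgeSupport S ↔ ∃ q ∈ S, v ∈ q := by
  simp [edgeSupport]

lemma edgeSupport_mono {S T : Finset (Sym2 V)} (h : S ⊆ T) : edgeSupport S ⊆ edgeSupport T :=
  biUnion_subset_biUnion_of_subset_left _ h

lemma disjoint_of_disjoint_edgeSupport {S T : Finset (Sym2 V)}
    (h : Disjoint (edgeSupport S) (edgeSupport T)) : Disjoint S T :=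
  disjoint_left.2 fun q hS hT => disjoint_left.1 h (mem_edgeSupport.2 ⟨q, hS, q.out_fst_mem⟩)
    (mem_edgeSupport.2 ⟨q, hT, q.out_fst_mem⟩)

lemma exists_split_of_not_reachable {S : Finset (Sym2 V)} {a b : V} (ha : a ∈ edgeSupport S)
    (hb : b ∈ edgeSupport S) (hab : ¬ (fromEdgeSet (S : Set (Sym2 V))).Reachable a b) :
    ∃ A B, A.Nonempty ∧ B.Nonempty ∧ Disjoint (edgeSupport A) (edgeSupport B) ∧ A ∪ B = S := by
  classical
  set H := fromEdgeSet (S : Set (Sym2 V))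
  let near : Sym2 V → Prop := fun q => ∀ z ∈ q, H.Reachable a z
  obtain ⟨qa, hqa, haqa⟩ := mem_edgeSupport.1 ha
  obtain ⟨qb, hqb, hbqb⟩ := mem_edgeSupport.1 hb
  refine ⟨S.filter near, S.filter (¬ near ·), ⟨qa, mem_filter.2 ⟨hqa, fun z hz =>
    reachable_of_mem_edge hqa haqa hz⟩⟩, ⟨qb, mem_filter.2 ⟨hqb, fun h => hab (h b hbqb)⟩⟩,
    disjoint_left.2 fun v hvA hvB => ?_, filter_union_filter_not_eq _ _⟩
  obtain ⟨q, hq, hvq⟩ := mem_edgeSupport.1 hvA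
  obtain ⟨q', hq', hvq'⟩ := mem_edgeSupport.1 hvB
  rw [mem_filter] at hq hq'
  exact hq'.2 fun z hz => (hq.2 v hvq).trans (reachable_of_mem_edge hq'.1 hvq' hz)

lemma exists_first_edge {S : Finset (Sym2 V)} {x d : V}
    (h : (fromEdgeSet (S : Set (Sym2 V))).Reachable x d) (hxd : x ≠ d) :
    ∃ c, s(x, c) ∈ S ∧ (c = d ∨ c ∈ edgeSupport (S.erase s(x, c))) := by
  obtain ⟨p, hp⟩ := h.exists_isPath
  have hlen : 0 < p.length := by
    by_contra h0
    exact hxd (by simpa [Nat.eq_zero_of_not_pos h0] using p.getVert_length)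
  have hadj₁ := p.adj_getVert_succ hlen
  rw [p.getVert_zero, fromEdgeSet_adj] at hadj₁
  refine ⟨p.getVert 1, hadj₁.1, ?_⟩
  rcases (Nat.succ_le_of_lt hlen).eq_or_lt with h1 | h2
  · exact .inl (by rw [show 1 = p.length from h1, p.getVert_length])
  have hadj₂ := (fromEdgeSet_adj _).1 (p.adj_getVert_succ (i := 1) h2)
  have hx₂ : p.getVert 2 ≠ x := fun h =>
    absurd (hp.getVert_injOn (by simp; omega) (by simp) (h.trans p.getVert_zero.symm)) (by simp)
  refine .inr (mem_edgeSupport.2 ⟨_, mem_erase.2 ⟨fun h => ?_, hadj₂.1⟩, Sym2.mem_mk_left _ _⟩)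
  rcases Sym2.eq_iff.1 h with ⟨-, h⟩ | ⟨-, h⟩
  · exact hadj₂.2 h.symm
  · exact hx₂ h

lemma exists_mem_edgeSupport_erase {S : Finset (Sym2 V)}
    (hconn : ∀ a ∈ edgeSupport S, ∀ b ∈ edgeSupport S,
      (fromEdgeSet (S : Set (Sym2 V))).Reachable a b) (hS : 1 < #S) :
    ∃ q ∈ S, ∃ x ∈ q, x ∈ edgeSupport (S.erase q) := by
  obtain ⟨q₁, hq₁, q₂, hq₂, hne⟩ := one_lt_card.1 hS
  by_cases hmeet : ∃ y ∈ q₂, y ∈ q₁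
  · obtain ⟨y, hy₂, hy₁⟩ := hmeet
    exact ⟨q₁, hq₁, y, hy₁, mem_edgeSupport.2 ⟨q₂, mem_erase.2 ⟨hne.symm, hq₂⟩, hy₂⟩⟩
  push Not at hmeet
  have had : q₁.out.1 ≠ q₂.out.1 := fun h => hmeet _ q₂.out_fst_mem (h ▸ q₁.out_fst_mem)
  obtain ⟨c, hc, hcd⟩ := exists_first_edge (hconn _ (mem_edgeSupport.2 ⟨q₁, hq₁, q₁.out_fst_mem⟩)
    _ (mem_edgeSupport.2 ⟨q₂, hq₂, q₂.out_fst_mem⟩)) had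
  by_cases h : s(q₁.out.1, c) = q₁
  · refine ⟨q₁, hq₁, c, h ▸ Sym2.mem_mk_right _ _, ?_⟩
    rcases hcd with hcd | hcd
    · exact absurd (h ▸ Sym2.mem_mk_right _ _) (hcd ▸ hmeet _ q₂.out_fst_mem)
    · rwa [h] at hcd
  · exact ⟨q₁, hq₁, _, q₁.out_fst_mem,
      mem_edgeSupport.2 ⟨_, mem_erase.2 ⟨h, hc⟩, Sym2.mem_mk_left _ _⟩⟩

lemma exists_internal_edge {S : Finset (Sym2 V)}
    (hconn : ∀ a ∈ edgeSupport S, ∀ b ∈ edgeSupport S,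
      (fromEdgeSet (S : Set (Sym2 V))).Reachable a b) (hS : 1 < #S)
    (hstar : ∀ v, ∃ q ∈ S, v ∉ q) :
    ∃ x c, s(x, c) ∈ S ∧ x ∈ edgeSupport (S.erase s(x, c)) ∧
      c ∈ edgeSupport (S.erase s(x, c)) := by
  obtain ⟨q, hq, x, hxq, hx⟩ := exists_mem_edgeSupport_erase hconn hS
  obtain ⟨q', hq', hxq'⟩ := mem_edgeSupport.1 hx
  obtain ⟨q'', hq'', hxq''⟩ := hstar x
  have hxd : x ≠ q''.out.1 := fun h => hxq'' (h ▸ q''.out_fst_mem)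
  obtain ⟨c, hc, hcd⟩ := exists_first_edge (hconn _ (mem_edgeSupport.2 ⟨q, hq, hxq⟩)
    _ (mem_edgeSupport.2 ⟨q'', hq'', q''.out_fst_mem⟩)) hxd
  refine ⟨x, c, hc, ?_, ?_⟩
  · by_cases h : q = s(x, c)
    · exact mem_edgeSupport.2
        ⟨q', mem_erase.2 ⟨h ▸ (mem_erase.1 hq').1, (mem_erase.1 hq').2⟩, hxq'⟩
    · exact mem_edgeSupport.2 ⟨q, mem_erase.2 ⟨h, hq⟩, hxq⟩
  · rcases hcd with hcd | hcd
    · exact mem_edgeSupport.2 ⟨q'', mem_erase.2 ⟨fun h => hxq'' (h ▸ Sym2.mem_mk_left x c), hq''⟩,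
        hcd ▸ q''.out_fst_mem⟩
    · exact hcd

lemma not_reachable_erase_of_isAcyclic {G : SimpleGraph V} (hG : G.IsAcyclic)
    {S : Finset (Sym2 V)} (hSG : (S : Set (Sym2 V)) ⊆ G.edgeSet) {a c : V} (hac : s(a, c) ∈ S) :
    ¬ (fromEdgeSet (S.erase s(a, c) : Set (Sym2 V))).Reachable a c := by
  refine fun h => isBridge_iff.1 (isAcyclic_iff_forall_isBridge.1 hG (hSG hac)) (h.mono ?_)
  intro x y hxy
  rw [fromEdgeSet_adj, coe_erase] at hxy
  exact deleteEdges_adj.2 ⟨hSG hxy.1.1, hxy.1.2⟩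

lemma exists_split_of_isAcyclic {G : SimpleGraph V} (hG : G.IsAcyclic) {S : Finset (Sym2 V)}
    (hSG : (S : Set (Sym2 V)) ⊆ G.edgeSet) (hS : 1 < #S) (hstar : ∀ v, ∃ q ∈ S, v ∉ q) :
    ∃ A B, A.Nonempty ∧ B.Nonempty ∧ Disjoint (edgeSupport A) (edgeSupport B) ∧
      A ∪ B ⊆ S ∧ #S ≤ #(A ∪ B) + 1 := by
  by_cases hconn : ∀ a ∈ edgeSupport S, ∀ b ∈ edgeSupport S,
      (fromEdgeSet (S : Set (Sym2 V))).Reachable a b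
  · obtain ⟨x, c, hxc, hx, hc⟩ := exists_internal_edge hconn hS hstar
    obtain ⟨A, B, hA, hB, hAB, heq⟩ :=
      exists_split_of_not_reachable hx hc (not_reachable_erase_of_isAcyclic hG hSG hxc)
    exact ⟨A, B, hA, hB, hAB, heq ▸ erase_subset _ _, by rw [heq, card_erase_of_mem hxc]; omega⟩
  · push Not at hconn
    obtain ⟨a, ha, b, hb, hab⟩ := hconn
    obtain ⟨A, B, hA, hB, hAB, heq⟩ := exists_split_of_not_reachable ha hb hab
    exact ⟨A, B, hA, hB, hAB, heq.le, heq ▸ Nat.le_succ _⟩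

lemma eq_image_of_forall_mem {S : Finset (Sym2 V)} (hnd : ∀ q ∈ S, ¬ q.IsDiag) {v : V}
    (hv : ∀ q ∈ S, v ∈ q) : S = ((edgeSupport S).erase v).image (fun l => s(v, l)) := by
  ext q
  simp only [mem_image, mem_erase, mem_edgeSupport]
  constructor
  · intro hq
    obtain ⟨w, rfl⟩ := Sym2.mem_iff_exists.1 (hv q hq)
    exact ⟨w, ⟨fun h => hnd _ hq (h ▸ Sym2.mk_isDiag_iff.2 rfl), _, hq, Sym2.mem_mk_right _ _⟩, rfl⟩
  · rintro ⟨l, ⟨hlv, q', hq', hlq'⟩, rfl⟩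
    rwa [← (Sym2.mem_and_mem_iff (Ne.symm hlv)).1 ⟨hv q' hq', hlq'⟩]

variable [Fintype V] {P : Matrix V V ℝ}

lemma sum_edgeEnergy_star_le (hPs : P.IsSymm) (hPi : IsIdempotentElem P) {v : V}
    {L : Finset V} (hv : v ∉ L) (hL : L.Nonempty) :
    ∑ l ∈ L, edgeEnergy P s(v, l) ≤ #L + 2 * (P v v + ∑ l ∈ L, P l l) - 1 := by
  set Q := ∑ l ∈ L, P v l ^ 2
  have hsum : ∑ l ∈ L, edgeEnergy P s(v, l) =
      #L * P v v + ∑ l ∈ L, P l l + 2 * -∑ l ∈ L, P v l := by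
    simp only [edgeEnergy_mk, hPs.apply, sum_sub_distrib, sum_add_distrib, sum_const,
      nsmul_eq_mul]
    ring
  have hQ_row : Q ≤ P v v - P v v ^ 2 := by
    have hsub : L ⊆ univ.erase v := fun l hl =>
      mem_erase.2 ⟨ne_of_mem_of_not_mem hl hv, mem_univ l⟩
    calc Q ≤ ∑ z ∈ univ.erase v, P v z ^ 2 :=
          sum_le_sum_of_subset_of_nonneg hsub fun _ _ _ => sq_nonneg _
      _ = P v v - P v v ^ 2 := by rw [sum_erase_eq_sub (mem_univ v), sum_sq_row_eq hPs hPi]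
  have hQ_diag : Q ≤ P v v * ∑ l ∈ L, P l l := by
    rw [mul_sum]
    exact sum_le_sum fun l _ => sq_le_diag_mul_diag hPs hPi v l
  have hR : (-∑ l ∈ L, P v l) ^ 2 ≤ #L * min (P v v - P v v ^ 2) (P v v * ∑ l ∈ L, P l l) :=
    (neg_sq _).trans_le <| sq_sum_le_card_mul_sum_sq.trans <|
      mul_le_mul_of_nonneg_left (le_min hQ_row hQ_diag) (Nat.cast_nonneg _)
  have := star_scalar_bound (by exact_mod_cast hL.card_pos) (diag_nonneg hPs hPi v)
    (diag_le_one hPs hPi v) (sum_nonneg fun l _ => diag_nonneg hPs hPi l) hR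
  linarith

lemma sum_edgeEnergy_le_of_forall_mem (hPs : P.IsSymm) (hPi : IsIdempotentElem P)
    {S : Finset (Sym2 V)} (hnd : ∀ q ∈ S, ¬ q.IsDiag) (hS : S.Nonempty) {v : V}
    (hv : ∀ q ∈ S, v ∈ q) :
    ∑ q ∈ S, edgeEnergy P q ≤ #S + 2 * ∑ w ∈ edgeSupport S, P w w - 1 := by
  set L := (edgeSupport S).erase v
  have hSL : S = L.image (fun l => s(v, l)) := eq_image_of_forall_mem hnd hv
  have hinj : Function.Injective (fun l => s(v, l)) := fun _ _ => Sym2.congr_right.1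
  have hvS : v ∈ edgeSupport S := mem_edgeSupport.2 ⟨_, hS.choose_spec, hv _ hS.choose_spec⟩
  have hL : L.Nonempty := by
    by_contra h
    rw [not_nonempty_iff_eq_empty.1 h, image_empty] at hSL
    exact hS.ne_empty hSL
  have hsum : ∑ q ∈ S, edgeEnergy P q = ∑ l ∈ L, edgeEnergy P s(v, l) := by
    conv_lhs => rw [hSL]
    exact sum_image hinj.injOn
  have hcard : #S = #L := by
    conv_lhs => rw [hSL]
    exact card_image_of_injective _ hinj
  have hsupp : ∑ w ∈ edgeSupport S, P w w = P v v + ∑ l ∈ L, P l l := by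
    conv_lhs => rw [← insert_erase hvS]
    exact sum_insert (notMem_erase v _)
  rw [hsum, hcard, hsupp]
  exact sum_edgeEnergy_star_le hPs hPi (notMem_erase v _) hL

theorem sum_edgeEnergy_le_of_isAcyclic (hPs : P.IsSymm) (hPi : IsIdempotentElem P)
    {G : SimpleGraph V} (hG : G.IsAcyclic) {S : Finset (Sym2 V)}
    (hSG : (S : Set (Sym2 V)) ⊆ G.edgeSet) (hS : S.Nonempty) :
    ∑ q ∈ S, edgeEnergy P q ≤ #S + 2 * ∑ w ∈ edgeSupport S, P w w - 1 := by
  induction S using Finset.strongInduction with | H S ih => ?_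
  by_cases hstar : ∃ v, ∀ q ∈ S, v ∈ q
  · obtain ⟨v, hv⟩ := hstar
    exact sum_edgeEnergy_le_of_forall_mem hPs hPi
      (fun q hq => G.not_isDiag_of_mem_edgeSet (hSG hq)) hS hv
  push Not at hstar
  have hS1 : 1 < #S := by
    by_contra h
    obtain ⟨q, rfl⟩ := card_eq_one.1 (le_antisymm (not_lt.1 h) hS.card_pos)
    obtain ⟨q', hq', hvq'⟩ := hstar q.out.1
    exact hvq' (mem_singleton.1 hq' ▸ q.out_fst_mem)
  obtain ⟨A, B, hA, hB, hAB, hABS, hcard⟩ := exists_split_of_isAcyclic hG hSG hS1 hstar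
  have hdisj := disjoint_of_disjoint_edgeSupport hAB
  have hAS : A ⊂ S := (ssubset_iff_of_subset (subset_union_left.trans hABS)).2
    ⟨_, hABS (subset_union_right hB.choose_spec), disjoint_right.1 hdisj hB.choose_spec⟩
  have hBS : B ⊂ S := (ssubset_iff_of_subset (subset_union_right.trans hABS)).2
    ⟨_, hABS (subset_union_left hA.choose_spec), disjoint_left.1 hdisj hA.choose_spec⟩
  have ihA := ih A hAS (subset_trans (by exact_mod_cast hAS.subset) hSG) hA
  have ihB := ih B hBS (subset_trans (by exact_mod_cast hBS.subset) hSG) hB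
  -- the edge joining `A` and `B`, if any, has energy at most 2, which pays for the extra `- 1`
  have hrest : ∑ q ∈ S \ (A ∪ B), edgeEnergy P q ≤ #(S \ (A ∪ B)) * 2 := by
    simpa using sum_le_card_nsmul _ _ 2 fun q hq =>
      edgeEnergy_le_two hPs hPi (G.not_isDiag_of_mem_edgeSet (hSG (mem_sdiff.1 hq).1))
  have hsupp : ∑ w ∈ edgeSupport A, P w w + ∑ w ∈ edgeSupport B, P w w ≤
      ∑ w ∈ edgeSupport S, P w w := by
    rw [← sum_union hAB]
    exact sum_le_sum_of_subset_of_nonneg (union_subset (edgeSupport_mono hAS.subset)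
      (edgeSupport_mono hBS.subset)) fun w _ _ => diag_nonneg hPs hPi w
  have hcards := card_sdiff_add_card_eq_card hABS
  rw [card_union_of_disjoint hdisj] at hcards hcard
  have hd : (#(S \ (A ∪ B)) : ℝ) ≤ 1 := by exact_mod_cast (by omega : #(S \ (A ∪ B)) ≤ 1)
  have hcards' : (#(S \ (A ∪ B)) : ℝ) + #A + #B = #S := by exact_mod_cast (by omega)
  rw [← sum_sdiff hABS, sum_union hdisj]
  linarith

lemma sum_edgeEnergy_le_of_trace_eq (hPs : P.IsSymm) (hPi : IsIdempotentElem P) {k : ℕ}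
    (htr : P.trace = k) {G : SimpleGraph V} (hG : G.IsAcyclic) {S : Finset (Sym2 V)}
    (hSG : (S : Set (Sym2 V)) ⊆ G.edgeSet) :
    ∑ q ∈ S, edgeEnergy P q ≤ #S + min #S (2 * k - 1) := by
  rcases S.eq_empty_or_nonempty with rfl | hS
  · simp
  have htwo : ∑ q ∈ S, edgeEnergy P q ≤ #S * 2 := by
    simpa using sum_le_card_nsmul _ _ 2 fun q hq =>
      edgeEnergy_le_two hPs hPi (G.not_isDiag_of_mem_edgeSet (hSG hq))
  have hforest : ∑ q ∈ S, edgeEnergy P q ≤ #S + 2 * k - 1 := by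
    have hsupp : ∑ w ∈ edgeSupport S, P w w ≤ k := htr ▸
      sum_le_univ_sum_of_nonneg fun w => diag_nonneg hPs hPi w
    linarith [sum_edgeEnergy_le_of_isAcyclic hPs hPi hG hSG hS]
  rcases le_total #S (2 * k - 1) with h | h
  · rw [min_eq_left h]
    linarith
  · rw [min_eq_right h]
    have : (2 * k : ℝ) - 1 ≤ ((2 * k - 1 : ℕ) : ℝ) := by
      rcases k.eq_zero_or_pos with rfl | hk
      · norm_num
      · rw [Nat.cast_sub (by omega)]
        push_cast
        rfl
    linarith

end EdgeSets

lemma sum_range_mul_le_of_partial_sums_le {ω c d : ℕ → ℝ} {N : ℕ} (hω : Antitone ω)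
    (hω0 : ∀ j, 0 ≤ ω j) (h : ∀ r ≤ N, ∑ j ∈ range r, c j ≤ ∑ j ∈ range r, d j) :
    ∑ j ∈ range N, ω j * c j ≤ ∑ j ∈ range N, ω j * d j := by
  have hpart : ∀ r ≤ N, 0 ≤ ∑ j ∈ range r, (d j - c j) := fun r hr => by
    rw [sum_sub_distrib]
    linarith [h r hr]
  rw [← sub_nonneg, ← sum_sub_distrib]
  simp_rw [← mul_sub, ← smul_eq_mul (a := ω _)]
  rw [sum_range_by_parts]
  refine sub_nonneg.2 ((sum_nonpos fun i hi => ?_).trans (smul_nonneg (hω0 _) (hpart N le_rfl)))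
  have hi : i + 1 ≤ N := by have := mem_range.1 hi; omega
  exact smul_nonpos_of_nonpos_of_nonneg (sub_nonpos.2 (hω (Nat.le_succ i))) (hpart _ hi)

theorem sum_antitone_mul_edgeEnergy_le [DecidableEq V] [Fintype V] {P : Matrix V V ℝ}
    (hPs : P.IsSymm) (hPi : IsIdempotentElem P) {k : ℕ} (htr : P.trace = k)
    {G : SimpleGraph V} (hG : G.IsAcyclic) {N : ℕ} {E : Fin N → Sym2 V}
    (hE : Function.Injective E) (hEG : ∀ j, E j ∈ G.edgeSet) {ω : ℕ → ℝ} (hω : Antitone ω)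
    (hω0 : ∀ j, 0 ≤ ω j) :
    ∑ j : Fin N, ω j * edgeEnergy P (E j) ≤
      ∑ j ∈ range N, ω j + ∑ j ∈ range (2 * k - 1), ω j := by
  set c : ℕ → ℝ := fun j => if h : j < N then edgeEnergy P (E ⟨j, h⟩) else 0
  set d : ℕ → ℝ := fun j => 1 + if j < 2 * k - 1 then 1 else 0
  have hprefix : ∀ r ≤ N, ∑ j ∈ range r, c j ≤ ∑ j ∈ range r, d j := by
    intro r hr
    set S := univ.image fun j : Fin r => E (Fin.castLE hr j)
    have hinj : Function.Injective fun j : Fin r => E (Fin.castLE hr j) :=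
      hE.comp (Fin.castLE_injective hr)
    have hc : ∑ j ∈ range r, c j = ∑ q ∈ S, edgeEnergy P q := by
      rw [sum_image hinj.injOn, ← Fin.sum_univ_eq_sum_range]
      exact sum_congr rfl fun j _ => dif_pos _
    have hd : ∑ j ∈ range r, d j = r + min r (2 * k - 1) := by
      have hfilter : (range r).filter (· < 2 * k - 1) = range (min r (2 * k - 1)) := by
        ext j
        simp only [mem_filter, mem_range]
        omega
      simp [d, sum_add_distrib, hfilter]
    rw [hc, hd]
    simpa [S, card_image_of_injective _ hinj] using
      sum_edgeEnergy_le_of_trace_eq hPs hPi htr hG (S := S)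
        (by simpa [S, Set.subset_def] using fun j => hEG _)
  calc ∑ j : Fin N, ω j * edgeEnergy P (E j) = ∑ j ∈ range N, ω j * c j := by
        rw [← Fin.sum_univ_eq_sum_range]
        exact sum_congr rfl fun j _ => by simp [c]
    _ ≤ ∑ j ∈ range N, ω j * d j := sum_range_mul_le_of_partial_sums_le hω hω0 hprefix
    _ ≤ ∑ j ∈ range N, ω j + ∑ j ∈ range (2 * k - 1), ω j := by
        simp only [d, mul_add, mul_one, mul_ite, mul_zero, sum_add_distrib, ← sum_filter]
        gcongr
        · exact fun j _ _ => hω0 j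
        · intro j hj
          simp only [mem_filter, mem_range] at hj ⊢
          omega

section Matrices

variable {ι : Type*} [Fintype ι] [Fintype V]

lemma sum_dotProduct_mulVec_eq_trace (U : Matrix ι V ℝ) (M : Matrix V V ℝ) :
    ∑ i, U i ⬝ᵥ M *ᵥ U i = (M * (Uᵀ * U)).trace := by
  rw [← Matrix.mul_assoc, trace_mul_comm]
  simp [trace, mul_apply, dotProduct, mulVec, mul_sum, mul_comm]

lemma isIdempotentElem_transpose_mul_self [DecidableEq ι] {U : Matrix ι V ℝ}
    (hU : U * Uᵀ = 1) : IsIdempotentElem (Uᵀ * U) := by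
  rw [IsIdempotentElem, Matrix.mul_assoc, ← Matrix.mul_assoc U, hU, Matrix.one_mul]

lemma trace_transpose_mul_self [DecidableEq ι] {U : Matrix ι V ℝ} (hU : U * Uᵀ = 1) :
    (Uᵀ * U).trace = Fintype.card ι := by
  rw [trace_mul_comm, hU, trace_one]

lemma sum_sum_eq_two_mul_sum_of_edge_enum {G : SimpleGraph V} {F : V → V → ℝ}
    (hF : ∀ a b, F a b = F b a) (hF0 : ∀ a b, ¬ G.Adj a b → F a b = 0) {e : ι → V × V}
    (hadj : ∀ i, G.Adj (e i).1 (e i).2)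
    (hinj : ∀ i j, s((e i).1, (e i).2) = s((e j).1, (e j).2) → i = j)
    (hsurj : ∀ a b, G.Adj a b → ∃ i, s((e i).1, (e i).2) = s(a, b)) :
    ∑ a, ∑ b, F a b = 2 * ∑ i, F (e i).1 (e i).2 := by
  let φ : ι ⊕ ι → V × V := Sum.elim e (Prod.swap ∘ e)
  have hφ : Function.Injective φ := by
    have hne : ∀ i j, e i ≠ (e j).swap := fun i j h => by
      have hij := hinj i j (by rw [h]; exact Sym2.eq_swap)
      subst hij
      exact (hadj i).ne (congrArg Prod.fst h)
    rintro (i | i) (j | j) h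
    · exact congrArg _ (hinj i j (by rw [show e i = e j from h]))
    · exact absurd h (hne i j)
    · exact absurd h.symm (hne j i)
    · exact congrArg _
        (hinj i j (by rw [Prod.swap_injective (show (e i).swap = (e j).swap from h)]))
  have hrange : ∀ p ∉ Set.range φ, F p.1 p.2 = 0 := by
    refine fun p hp => hF0 _ _ fun hpG => hp ?_
    obtain ⟨i, hi⟩ := hsurj _ _ hpG
    rcases Sym2.eq_iff.1 hi with ⟨h1, h2⟩ | ⟨h1, h2⟩
    · exact ⟨.inl i, Prod.ext h1 h2⟩
    · exact ⟨.inr i, Prod.ext h2 h1⟩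
  rw [← Fintype.sum_prod_type', ← Fintype.sum_of_injective φ hφ _ _ hrange fun _ => rfl,
    Fintype.sum_sum_type, two_mul]
  simp only [φ, Sum.elim_inl, Sum.elim_inr, Function.comp_apply, Prod.fst_swap, Prod.snd_swap]
  rw [sum_congr rfl fun i _ => hF (e i).2 (e i).1]

lemma trace_lap_mul {n : ℕ} {A : Matrix (Fin n) (Fin n) ℝ} (hA : A.IsSymm)
    (P : Matrix (Fin n) (Fin n) ℝ) :
    (lap A * P).trace = (∑ a, ∑ b, A a b * edgeEnergy P s(a, b)) / 2 := by
  have hswap : ∀ f : Fin n → Fin n → ℝ, ∑ a, ∑ b, A a b * f b a = ∑ a, ∑ b, A a b * f a b := by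
    intro f
    rw [sum_comm]
    simp_rw [hA.apply]
  have hdiag := hswap fun a _ => P a a
  have hoff := hswap fun a b => P a b
  rw [lap, Matrix.sub_mul, trace_sub]
  simp only [trace, Matrix.diag_apply, diagonal_mul]
  simp only [mul_apply, edgeEnergy_mk, mul_sub, mul_add, sum_sub_distrib, sum_add_distrib,
    sum_mul] at *
  linarith

end Matrices

theorem weighted_brouwer_for_trees_general {n : ℕ}
    (G : SimpleGraph (Fin n)) (hG : G.IsTree)
    (A : Matrix (Fin n) (Fin n) ℝ) (hsym : A.IsSymm)
    (hsupp : ∀ i j, ¬ G.Adj i j → A i j = 0)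
    -- `ω 0, ω 1, …` lists the edge weights in decreasing order, extended by zeros
    (ω : ℕ → ℝ) (hmono : Antitone ω)
    (hzero : ∀ i, n - 1 ≤ i → ω i = 0)
    (e : Fin (n - 1) → Fin n × Fin n)
    (hadj : ∀ i, G.Adj (e i).1 (e i).2)
    (hw : ∀ i : Fin (n - 1), ω i = A (e i).1 (e i).2)
    (hinj : ∀ i j : Fin (n - 1), s((e i).1, (e i).2) = s((e j).1, (e j).2) → i = j)
    (hsurj : ∀ a b : Fin n, G.Adj a b → ∃ i, s((e i).1, (e i).2) = s(a, b))
    (k : ℕ)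
    (u : Fin k → Fin n → ℝ)
    (horth : ∀ i j, u i ⬝ᵥ u j = if i = j then 1 else 0) :
    ∑ i, u i ⬝ᵥ (lap A).mulVec (u i) ≤
      (∑ i ∈ Finset.range (n - 1), ω i) + ∑ i ∈ Finset.range (2 * k - 1), ω i := by
  set U : Matrix (Fin k) (Fin n) ℝ := Matrix.of u
  have hU : U * Uᵀ = 1 := by
    ext i j
    rw [mul_apply', one_apply, ← horth i j]
    rfl
  have hω0 : ∀ j, 0 ≤ ω j := fun j =>
    (hzero _ (Nat.le_add_left _ j)).symm.le.trans (hmono (Nat.le_add_right j (n - 1)))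
  calc ∑ i, u i ⬝ᵥ (lap A).mulVec (u i)
      = (∑ a, ∑ b, A a b * edgeEnergy (Uᵀ * U) s(a, b)) / 2 := by
        rw [← trace_lap_mul hsym]
        exact sum_dotProduct_mulVec_eq_trace U (lap A)
    _ = ∑ j : Fin (n - 1), ω j * edgeEnergy (Uᵀ * U) s((e j).1, (e j).2) := by
        rw [sum_sum_eq_two_mul_sum_of_edge_enum (fun a b => by rw [hsym.apply, Sym2.eq_swap])
          (fun a b h => by rw [hsupp a b h, zero_mul]) hadj hinj hsurj]
        simp only [hw, mul_div_cancel_left₀ _ (two_ne_zero (α := ℝ))]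
    _ ≤ _ := sum_antitone_mul_edgeEnergy_le (by rw [IsSymm, transpose_mul, transpose_transpose])
        (isIdempotentElem_transpose_mul_self hU)
        (by rw [trace_transpose_mul_self hU, Fintype.card_fin]) hG.isAcyclic
        (E := fun j => s((e j).1, (e j).2)) (fun i j h => hinj i j h) (fun j => hadj j) hmono hω0

/-- Weighted Brouwer bound for trees: for a weighted tree `T` on `n` vertices with
nonnegative edge weights `ω 0 ≥ ω 1 ≥ ⋯ ≥ ω (n-2) ≥ 0` (extended by zeros),
the sum of the `k` largest Laplacian eigenvalues is at most
`e(T) + Σ_{i=1}^{2k-1} ω_i`. -/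
theorem weighted_brouwer_for_trees {n : ℕ}
    (G : SimpleGraph (Fin n)) (hG : G.IsTree)
    (A : Matrix (Fin n) (Fin n) ℝ) (hsym : A.IsSymm)
    (hsupp : ∀ i j, ¬ G.Adj i j → A i j = 0)
    (hnonneg : ∀ i j, 0 ≤ A i j)
    -- `ω 0, ω 1, …` lists the edge weights in decreasing order, extended by zeros
    (ω : ℕ → ℝ) (hmono : Antitone ω)
    (hzero : ∀ i, n - 1 ≤ i → ω i = 0)
    (e : Fin (n - 1) → Fin n × Fin n)
    (hadj : ∀ i, G.Adj (e i).1 (e i).2)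
    (hw : ∀ i : Fin (n - 1), ω i = A (e i).1 (e i).2)
    (hinj : ∀ i j : Fin (n - 1), s((e i).1, (e i).2) = s((e j).1, (e j).2) → i = j)
    (hsurj : ∀ a b : Fin n, G.Adj a b → ∃ i, s((e i).1, (e i).2) = s(a, b))
    (k : ℕ) (hk1 : 1 ≤ k) (hk2 : k ≤ n)
    (u : Fin k → Fin n → ℝ)
    (horth : ∀ i j, u i ⬝ᵥ u j = if i = j then 1 else 0) :
    ∑ i, u i ⬝ᵥ (lap A).mulVec (u i) ≤
      (∑ i ∈ Finset.range (n - 1), ω i) + ∑ i ∈ Finset.range (2 * k - 1), ω i :=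
  weighted_brouwer_for_trees_general G hG A hsym hsupp ω hmono hzero e hadj hw hinj hsurj k u horth
end

section
/- Let n, t ∈ ℕ with t < n − 1, let θ_1, …, θ_t be positive real numbers, let u_1, …, u_t ∈ ℝ^n be vectors each orthogonal to the all-ones vector, and set L = Σ_{i=1}^t θ_i u_i u_iᵀ. Let A = [ω_{ij}] = −L + Diag(L_{11}, …, L_{nn}), a symmetric matrix with zero diagonal. If A is irreducible — equivalently, the simple graph on vertex set [n] whose edges are the pairs {i,j} with ω_{ij} ≠ 0 is connected — then some entry of A is negative. -/
/-!
Suppose every entry of `A` is nonnegative. Since `t + 1 < n`, some `x ≠ 0` is orthogonal to the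
all-ones vector and to every `u k`, so `L x = 0`. As `L` has zero row and column sums, it is the
Laplacian of the weights `A`, whence `∑ i j, A i j (x i - x j)² = 2 xᵀ L x = 0`. With nonnegative
weights every term vanishes, so `x` is constant along the edges of the connected graph of `A`,
hence constant, hence zero because its entries sum to zero.
-/

open Matrix

theorem SimpleGraph.Reachable.eq_of_forall_adj {V β : Type*} {G : SimpleGraph V} {f : V → β}
    (hf : ∀ v w, G.Adj v w → f v = f w) {v w : V} (h : G.Reachable v w) : f v = f w := by
  obtain ⟨p⟩ := h
  induction p with
  | nil => rfl
  | cons hadj _ ih => exact (hf _ _ hadj).trans ih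

theorem Matrix.exists_ne_zero_forall_dotProduct_eq_zero {K m n : Type*} [Field K] [Fintype m]
    [Fintype n] (v : m → n → K) (h : Fintype.card m < Fintype.card n) :
    ∃ x ≠ 0, ∀ k, v k ⬝ᵥ x = 0 := by
  have hker : LinearMap.ker (Matrix.of v).mulVecLin ≠ ⊥ :=
    LinearMap.ker_ne_bot_of_finrank_lt (by simpa using h)
  obtain ⟨x, hx, hx0⟩ := (Submodule.ne_bot_iff _).mp hker
  exact ⟨x, hx0, fun k => congrFun hx k⟩

section

variable {ι κ R : Type*} [Fintype ι] [Fintype κ] [CommRing R]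

theorem Matrix.sum_smul_vecMulVec_mulVec (θ : κ → R) (u : κ → ι → R) (x : ι → R) :
    (∑ k, θ k • vecMulVec (u k) (u k)) *ᵥ x = ∑ k, (θ k * (u k ⬝ᵥ x)) • u k := by
  simp [Matrix.sum_mulVec, smul_mulVec, vecMulVec_mulVec, smul_smul]

theorem Matrix.vecMul_sum_smul_vecMulVec (θ : κ → R) (u : κ → ι → R) (x : ι → R) :
    x ᵥ* (∑ k, θ k • vecMulVec (u k) (u k)) = ∑ k, (θ k * (x ⬝ᵥ u k)) • u k := by
  simp [Matrix.vecMul_sum, vecMul_smul, vecMul_vecMulVec, smul_smul]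

theorem Matrix.sum_mul_sub_sq_eq_neg_two_mul_dotProduct_mulVec
    (L : Matrix ι ι R) (hrow : L *ᵥ 1 = 0) (hcol : 1 ᵥ* L = 0) (x : ι → R) :
    ∑ i, ∑ j, L i j * (x i - x j) ^ 2 = -2 * (x ⬝ᵥ L *ᵥ x) := by
  have hdiag : ∑ i, ∑ j, L i j * x i ^ 2 = 0 := by
    simpa [mulVec, dotProduct, ← Finset.sum_mul] using congrArg (· ⬝ᵥ fun i => x i ^ 2) hrow
  have hdiag' : ∑ i, ∑ j, L i j * x j ^ 2 = 0 := by
    rw [Finset.sum_comm]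
    simpa [vecMul, dotProduct, ← Finset.sum_mul] using congrArg (· ⬝ᵥ fun i => x i ^ 2) hcol
  have hcross : ∑ i, ∑ j, x i * (L i j * x j) = x ⬝ᵥ L *ᵥ x := by
    simp [dotProduct, mulVec, Finset.mul_sum]
  calc ∑ i, ∑ j, L i j * (x i - x j) ^ 2
      = ∑ i, ∑ j, L i j * x i ^ 2 - 2 * ∑ i, ∑ j, x i * (L i j * x j)
        + ∑ i, ∑ j, L i j * x j ^ 2 := by
        simp only [Finset.mul_sum, ← Finset.sum_sub_distrib, ← Finset.sum_add_distrib]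
        exact Finset.sum_congr rfl fun i _ => Finset.sum_congr rfl fun j _ => by ring
    _ = -2 * (x ⬝ᵥ L *ᵥ x) := by rw [hdiag, hdiag', hcross]; ring

theorem Matrix.eq_of_sum_mul_sub_sq_eq_zero [LinearOrder R] [IsStrictOrderedRing R]
    {A : Matrix ι ι R} (hA : ∀ i j, 0 ≤ A i j) {x : ι → R}
    (h : ∑ i, ∑ j, A i j * (x i - x j) ^ 2 = 0) {i j : ι} (hij : A i j ≠ 0) : x i = x j := by
  have hterm : ∀ i j, 0 ≤ A i j * (x i - x j) ^ 2 := fun i j =>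
    mul_nonneg (hA i j) (sq_nonneg _)
  have hrow := (Finset.sum_eq_zero_iff_of_nonneg fun i _ => Finset.sum_nonneg fun j _ =>
    hterm i j).mp h i (Finset.mem_univ i)
  have hij' := (Finset.sum_eq_zero_iff_of_nonneg fun j _ => hterm i j).mp hrow j (Finset.mem_univ j)
  simpa [hij, sub_eq_zero] using hij'

end

theorem irreducible_low_rank_has_negative_entry_general {n t : ℕ} (ht : t < n - 1)
    (θ : Fin t → ℝ)
    (u : Fin t → Fin n → ℝ) (hones : ∀ i, ∑ l, u i l = 0)
    (L A : Matrix (Fin n) (Fin n) ℝ)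
    (hL : L = ∑ i, θ i • Matrix.vecMulVec (u i) (u i))
    (hA : A = -L + Matrix.diagonal (fun i => L i i))
    (hconn : (SimpleGraph.fromRel (fun i j : Fin n => A i j ≠ 0)).Connected) :
    ∃ i j, A i j < 0 := by
  by_contra! hnonneg
  obtain ⟨x, hx0, hx⟩ := exists_ne_zero_forall_dotProduct_eq_zero
    (Fin.cons 1 u : Fin (t + 1) → Fin n → ℝ) (by simp only [Fintype.card_fin]; omega)
  have hsum : 1 ⬝ᵥ x = 0 := by simpa using hx 0
  have hux : ∀ k, u k ⬝ᵥ x = 0 := fun k => by simpa using hx k.succ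
  have hrow : L *ᵥ 1 = 0 := by simp [hL, sum_smul_vecMulVec_mulVec, dotProduct_one, hones]
  have hcol : 1 ᵥ* L = 0 := by simp [hL, vecMul_sum_smul_vecMulVec, one_dotProduct, hones]
  have hLx : L *ᵥ x = 0 := by simp [hL, sum_smul_vecMulVec_mulVec, hux]
  have hAL : ∀ i j, A i j * (x i - x j) ^ 2 = -(L i j * (x i - x j) ^ 2) := by
    intro i j
    rcases eq_or_ne i j with rfl | hij
    · simp
    · simp [hA, hij]
  have hAx : ∑ i, ∑ j, A i j * (x i - x j) ^ 2 = 0 := by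
    simp [hAL, sum_mul_sub_sq_eq_neg_two_mul_dotProduct_mulVec L hrow hcol, hLx]
  have hadj : ∀ i j, (SimpleGraph.fromRel fun i j => A i j ≠ 0).Adj i j → x i = x j := by
    rintro i j ⟨-, hij | hji⟩
    exacts [eq_of_sum_mul_sub_sq_eq_zero hnonneg hAx hij,
      (eq_of_sum_mul_sub_sq_eq_zero hnonneg hAx hji).symm]
  obtain ⟨i₀⟩ := hconn.nonempty
  have hconst : x = fun _ => x i₀ :=
    funext fun i => (hconn.preconnected i i₀).eq_of_forall_adj hadj
  have hxi₀ : x i₀ = 0 := by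
    rw [hconst] at hsum
    simpa [dotProduct, Nat.pos_iff_ne_zero.mp i₀.pos] using hsum
  exact hx0 (funext fun i => (congrFun hconst i).trans hxi₀)

theorem irreducible_low_rank_has_negative_entry {n t : ℕ} (ht : t < n - 1)
    (θ : Fin t → ℝ) (hθ : ∀ i, 0 < θ i)
    (u : Fin t → Fin n → ℝ) (hones : ∀ i, ∑ l, u i l = 0)
    (L A : Matrix (Fin n) (Fin n) ℝ)
    (hL : L = ∑ i, θ i • Matrix.vecMulVec (u i) (u i))
    (hA : A = -L + Matrix.diagonal (fun i => L i i))
    (hconn : (SimpleGraph.fromRel (fun i j : Fin n => A i j ≠ 0)).Connected) :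
    ∃ i j, A i j < 0 :=
  irreducible_low_rank_has_negative_entry_general ht θ u hones L A hL hA hconn
end

section
/- Let t, m ∈ ℕ, let [m] = P_1 ∪̇ ⋯ ∪̇ P_t be a partition of [m] into nonempty disjoint subsets, let 𝒫 ⊆ [m], and U = {Σ_{i∈𝒫} a_i e_i : a_i ≥ 0}. Let φ : U → ℝ be convex and positively homogeneous, and for given real numbers α_{ij} define f : U → ℝ by f(a) = Σ_j Σ_{i=1}^t α_{ij} · a^i_{↓j}, where a^i is the restriction of a to the index set P_i and a^i_{↓j} is the j-th largest entry of a^i. Then the following are equivalent: (1) φ(a) ≤ f(a) for every a ∈ U; (2) φ(a) ≤ f(a) for every a ∈ U all of whose coordinates lie in {0, 1}. -/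
lemma downOrd_eq {p : ℕ} (x : Fin p → ℝ) (σ : Equiv.Perm (Fin p))
    (h : Monotone (x ∘ σ)) (j : Fin p) : downOrd x j = x (σ j.rev) := by
  have := Tuple.comp_sort_eq_comp_iff_monotone.mpr h
  exact (congrFun this j.rev).symm

lemma exists_common_sort {p : ℕ} (v u : Fin p → ℝ)
    (hv : ∀ k, v k = 0 ∨ v k = 1) (hu : ∀ k, 0 ≤ u k)
    (himp : ∀ k, u k ≠ 0 → v k = 1) :
    ∃ σ : Equiv.Perm (Fin p), Monotone (v ∘ σ) ∧ Monotone (u ∘ σ) := by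
  refine ⟨Tuple.sort (v + u), ?_, ?_⟩
  · intro k l hkl
    have hw := Tuple.monotone_sort (v + u) hkl
    simp only [Function.comp, Pi.add_apply] at hw ⊢
    rcases hv (Tuple.sort (v+u) k) with h0 | h1
    · have : u (Tuple.sort (v+u) k) = 0 := by
        by_contra hne; rw [himp _ hne] at h0; norm_num at h0
      rw [h0]
      rcases hv (Tuple.sort (v+u) l) with h | h <;> simp [h]
    · rw [h1]
      rcases hv (Tuple.sort (v+u) l) with h | h
      · exfalso
        have : u (Tuple.sort (v+u) l) = 0 := by
          by_contra hne; rw [himp _ hne] at h; norm_num at h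
        rw [h1, h, this] at hw
        have := hu (Tuple.sort (v+u) k)
        linarith
      · rw [h] at hw ⊢
  · intro k l hkl
    have hw := Tuple.monotone_sort (v + u) hkl
    simp only [Function.comp, Pi.add_apply] at hw ⊢
    rcases hv (Tuple.sort (v+u) k) with h0 | h1
    · have : u (Tuple.sort (v+u) k) = 0 := by
        by_contra hne; rw [himp _ hne] at h0; norm_num at h0
      rw [this]; exact hu _
    · rcases hv (Tuple.sort (v+u) l) with h | h
      · exfalso
        have hul : u (Tuple.sort (v+u) l) = 0 := by
          by_contra hne; rw [himp _ hne] at h; norm_num at h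
        rw [h1, h, hul] at hw
        have := hu (Tuple.sort (v+u) k)
        linarith
      · rw [h1, h] at hw; linarith

lemma downOrd_decomp {p : ℕ} (v u : Fin p → ℝ) (c : ℝ) (hc : 0 ≤ c)
    (hv : ∀ k, v k = 0 ∨ v k = 1) (hu : ∀ k, 0 ≤ u k)
    (himp : ∀ k, u k ≠ 0 → v k = 1) (j : Fin p) :
    downOrd (fun k => c * v k + u k) j = c * downOrd v j + downOrd u j := by
  obtain ⟨σ, hvσ, huσ⟩ := exists_common_sort v u hv hu himp
  have hsum : Monotone ((fun k => c * v k + u k) ∘ σ) := by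
    intro k l hkl
    have h1 := hvσ hkl; have h2 := huσ hkl
    simp only [Function.comp] at h1 h2 ⊢
    nlinarith
  rw [downOrd_eq _ σ hsum, downOrd_eq _ σ hvσ, downOrd_eq _ σ huσ]

theorem convex_bound_iff_bound_on_zero_one_vectors {t m : ℕ}
    (P : Fin t → Finset (Fin m))
    (hPne : ∀ i, (P i).Nonempty)
    (hPdisj : ∀ i j, i ≠ j → Disjoint (P i) (P j))
    (hPcover : ∀ x : Fin m, ∃ i, x ∈ P i)
    (Psupp : Finset (Fin m)) (U : Set (Fin m → ℝ))
    (hU : U = {a | (∀ i, i ∉ Psupp → a i = 0) ∧ ∀ i, 0 ≤ a i})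
    (φ : (Fin m → ℝ) → ℝ)
    (hφconv : ConvexOn ℝ U φ)
    (hφhom : ∀ α : ℝ, 0 < α → ∀ v ∈ U, φ (α • v) = α * φ v)
    (α : Fin t → ℕ → ℝ)
    (f : (Fin m → ℝ) → ℝ)
    (hf : ∀ a, f a = ∑ i : Fin t, ∑ j : Fin (P i).card,
      α i (j : ℕ) * downOrd (restrictTo a (P i)) j) :
    (∀ a ∈ U, φ a ≤ f a) ↔
      (∀ a ∈ U, (∀ i, a i = 0 ∨ a i = 1) → φ a ≤ f a) := by
  constructor
  · intro h a ha _; exact h a ha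
  intro h01
  -- sublinearity of φ on U
  have hsub : ∀ u ∈ U, ∀ w ∈ U, φ (u + w) ≤ φ u + φ w := by
    intro u hu w hw
    have hmi : (1/2 : ℝ) • u + (1/2 : ℝ) • w ∈ U :=
      hφconv.1 hu hw (by norm_num) (by norm_num) (by norm_num)
    have h2 := hφhom 2 two_pos _ hmi
    have heq : (2:ℝ) • ((1/2:ℝ) • u + (1/2:ℝ) • w) = u + w := by
      rw [smul_add, smul_smul, smul_smul]; norm_num
    rw [heq] at h2
    have hconv := hφconv.2 hu hw (by norm_num : (0:ℝ) ≤ 1/2)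
      (by norm_num : (0:ℝ) ≤ 1/2) (by norm_num)
    simp only [smul_eq_mul] at hconv
    rw [h2]; linarith
  -- strong induction on the number of distinct nonzero values
  suffices H : ∀ n : ℕ, ∀ a ∈ U,
      ((Finset.univ.image a).filter (· ≠ 0)).card ≤ n → φ a ≤ f a by
    intro a ha; exact H _ a ha le_rfl
  intro n
  induction n with
  | zero =>
    intro a ha hcard
    have hV : (Finset.univ.image a).filter (· ≠ 0) = ∅ :=
      Finset.card_eq_zero.mp (Nat.le_zero.mp hcard)
    have hzero : ∀ i, a i = 0 := by
      intro i
      by_contra hne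
      have : a i ∈ (Finset.univ.image a).filter (· ≠ 0) := by
        simp [Finset.mem_filter, hne]
      rw [hV] at this; exact absurd this (Finset.notMem_empty _)
    exact h01 a ha (fun i => Or.inl (hzero i))
  | succ n ih =>
    intro a ha hcard
    set V := (Finset.univ.image a).filter (· ≠ 0) with hVdef
    by_cases hV : V.Nonempty
    swap
    · rw [Finset.not_nonempty_iff_eq_empty] at hV
      refine ih a ha ?_
      show V.card ≤ n
      rw [hV]; simp
    rw [hU] at ha
    obtain ⟨hasupp, hapos⟩ := ha
    set lam := V.min' hV with hlam
    have hlamV : lam ∈ V := V.min'_mem hV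
    have hlampos : 0 < lam := by
      have h1 : lam ≠ 0 := (Finset.mem_filter.mp hlamV).2
      obtain ⟨i0, _, hi0⟩ := Finset.mem_image.mp (Finset.mem_filter.mp hlamV).1
      have := hapos i0
      rw [hi0] at this
      exact lt_of_le_of_ne this (Ne.symm h1)
    set c : Fin m → ℝ := fun i => if a i = 0 then 0 else 1 with hcdef
    set a' : Fin m → ℝ := fun i => a i - lam * c i with ha'def
    have hc01 : ∀ i, c i = 0 ∨ c i = 1 := by
      intro i; by_cases h : a i = 0 <;> simp [hcdef, h]
    have hlamle : ∀ i, a i ≠ 0 → lam ≤ a i := by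
      intro i hne
      apply Finset.min'_le
      simp [hVdef, Finset.mem_filter, hne]
    have ha'pos : ∀ i, 0 ≤ a' i := by
      intro i
      by_cases h : a i = 0
      · simp [ha'def, hcdef, h]
      · have := hlamle i h
        simp only [ha'def, hcdef, if_neg h]
        linarith
    have hcU : c ∈ U := by
      rw [hU]
      refine ⟨fun i hi => ?_, fun i => ?_⟩
      · simp [hcdef, hasupp i hi]
      · rcases hc01 i with h | h <;> simp [h]
    have ha'U : a' ∈ U := by
      rw [hU]
      refine ⟨fun i hi => ?_, ha'pos⟩
      simp [ha'def, hcdef, hasupp i hi]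
    have hkey : ∀ i, a i = lam * c i + a' i := by intro i; simp [ha'def]
    have himp : ∀ i, a' i ≠ 0 → c i = 1 := by
      intro i hne
      by_cases h : a i = 0
      · exfalso; apply hne; simp [ha'def, hcdef, h]
      · simp [hcdef, h]
    -- cardinality decreases
    have hcard' : ((Finset.univ.image a').filter (· ≠ 0)).card ≤ n := by
      have hsub2 : (Finset.univ.image a').filter (· ≠ 0) ⊆
          (V.erase lam).image (fun v => v - lam) := by
        intro v hv
        simp only [Finset.mem_filter, Finset.mem_image, Finset.mem_univ, true_and,
          Finset.mem_erase] at hv ⊢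
        obtain ⟨⟨i, hi⟩, hne⟩ := hv
        have hai : a i ≠ 0 := by
          intro h0
          apply hne; rw [← hi]; simp [ha'def, hcdef, h0]
        have hci : c i = 1 := by simp [hcdef, hai]
        refine ⟨a i, ⟨?_, ?_⟩, ?_⟩
        · intro heq
          apply hne
          rw [← hi, ha'def]; simp [hci, heq]
        · simp [hVdef, Finset.mem_filter, hai]
        · rw [← hi]
          show a i - lam = a i - lam * c i
          rw [hci, mul_one]
      calc ((Finset.univ.image a').filter (· ≠ 0)).card
          ≤ ((V.erase lam).image (fun v => v - lam)).card := Finset.card_le_card hsub2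
        _ ≤ (V.erase lam).card := Finset.card_image_le
        _ = V.card - 1 := Finset.card_erase_of_mem hlamV
        _ ≤ n := by omega
    -- φ bound
    have hcφ : φ c ≤ f c := h01 c hcU hc01
    have ha'φ : φ a' ≤ f a' := ih a' ha'U hcard'
    have hlamc : φ (lam • c) = lam * φ c := hφhom lam hlampos c hcU
    have hlamcU : lam • c ∈ U := by
      rw [hU]
      refine ⟨fun i hi => ?_, fun i => ?_⟩
      · simp [hcdef, hasupp i hi]
      · rcases hc01 i with h | h <;> simp [h, hlampos.le]
    have haeq : a = lam • c + a' := by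
      funext i; simp [hkey i]
    have hφa : φ a ≤ lam * φ c + φ a' := by
      rw [haeq, ← hlamc]
      exact hsub _ hlamcU _ ha'U
    -- f additivity
    have hfadd : f a = lam * f c + f a' := by
      rw [hf, hf, hf, Finset.mul_sum, ← Finset.sum_add_distrib]
      refine Finset.sum_congr rfl (fun i _ => ?_)
      rw [Finset.mul_sum, ← Finset.sum_add_distrib]
      refine Finset.sum_congr rfl (fun j _ => ?_)
      have hrestr : restrictTo a (P i) =
          fun k => lam * restrictTo c (P i) k + restrictTo a' (P i) k := by
        funext k; simp [restrictTo, hkey]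
      rw [hrestr, downOrd_decomp (restrictTo c (P i)) (restrictTo a' (P i)) lam
        hlampos.le (fun k => hc01 _) (fun k => ha'pos _) (fun k h => himp _ h) j]
      ring
    have : lam * φ c ≤ lam * f c := mul_le_mul_of_nonneg_left hcφ hlampos.le
    linarith
end
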